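/- arXiv:1108.5970 — 3 statements merged into one kernel-verified Lean document; each statement's English description precedes it below -/
import Mathlib

section
/- Let A be a smooth, rapidly decaying solution of the short-pulse equation A_{ξτ} = A + (A³)_{ξξ} with well-defined decaying antiderivatives ∂_ξ^{-1}A and ∂_ξ^{-2}A. Then the second time derivative satisfies A_{ττ} = ∂_ξ^{-2}A + 3(A²)_ξ ∂_ξ^{-1}A + 4A³ + (9/5)(A⁵)_{ξξ}. -/
open MeasureTheory Set Filter



noncomputable def Pd (H : ℝ × ℝ → ℝ) : ℝ × ℝ → ℝ := fun p => fderiv ℝ H p (1, 0)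
noncomputable def Qd (H : ℝ × ℝ → ℝ) : ℝ × ℝ → ℝ := fun p => fderiv ℝ H p (0, 1)

section basic
variable {H : ℝ × ℝ → ℝ}

lemma hasDerivAt_Pd (hH : ContDiff ℝ (⊤ : ℕ∞) H) (t x : ℝ) :
    HasDerivAt (fun t' => H (t', x)) (Pd H (t, x)) t := by
  have h := ((hH.differentiable (by simp) (t, x)).hasFDerivAt).comp_hasDerivAt t
    ((hasDerivAt_id t).prodMk (hasDerivAt_const t x))
  exact h

lemma hasDerivAt_Qd (hH : ContDiff ℝ (⊤ : ℕ∞) H) (t x : ℝ) :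
    HasDerivAt (fun x' => H (t, x')) (Qd H (t, x)) x := by
  have h := ((hH.differentiable (by simp) (t, x)).hasFDerivAt).comp_hasDerivAt x
    ((hasDerivAt_const x t).prodMk (hasDerivAt_id x))
  exact h

lemma contDiff_Pd (hH : ContDiff ℝ (⊤ : ℕ∞) H) : ContDiff ℝ (⊤ : ℕ∞) (Pd H) :=
  (ContinuousLinearMap.apply ℝ ℝ ((1:ℝ), (0:ℝ))).contDiff.comp (hH.fderiv_right (by simp))

lemma contDiff_Qd (hH : ContDiff ℝ (⊤ : ℕ∞) H) : ContDiff ℝ (⊤ : ℕ∞) (Qd H) :=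
  (ContinuousLinearMap.apply ℝ ℝ ((0:ℝ), (1:ℝ))).contDiff.comp (hH.fderiv_right (by simp))

lemma Qd_Pd_swap (hH : ContDiff ℝ (⊤ : ℕ∞) H) (p : ℝ × ℝ) : Qd (Pd H) p = Pd (Qd H) p := by
  have hd : Differentiable ℝ (fderiv ℝ H) := (hH.fderiv_right (m := (⊤ : ℕ∞)) (by simp)).differentiable (by simp)
  have hsymm := second_derivative_symmetric
    (f := H) (f' := fderiv ℝ H) (f'' := fderiv ℝ (fderiv ℝ H) p) (x := p)
    (fun y => (hH.differentiable (by simp) y).hasFDerivAt) (hd p).hasFDerivAt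
  have h1 : HasFDerivAt (Pd H)
      ((ContinuousLinearMap.apply ℝ ℝ ((1:ℝ),(0:ℝ))).comp (fderiv ℝ (fderiv ℝ H) p)) p :=
    (ContinuousLinearMap.apply ℝ ℝ ((1:ℝ),(0:ℝ))).hasFDerivAt.comp p (hd p).hasFDerivAt
  have h2 : HasFDerivAt (Qd H)
      ((ContinuousLinearMap.apply ℝ ℝ ((0:ℝ),(1:ℝ))).comp (fderiv ℝ (fderiv ℝ H) p)) p :=
    (ContinuousLinearMap.apply ℝ ℝ ((0:ℝ),(1:ℝ))).hasFDerivAt.comp p (hd p).hasFDerivAt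
  have e1 : Qd (Pd H) p = fderiv ℝ (fderiv ℝ H) p (0,1) (1,0) := by
    have := h1.fderiv
    simp only [Qd, this]; rfl
  have e2 : Pd (Qd H) p = fderiv ℝ (fderiv ℝ H) p (1,0) (0,1) := by
    have := h2.fderiv
    simp only [Pd, this]; rfl
  rw [e1, e2, hsymm]

end basic

lemma integrableOn_Iic_all {f : ℝ → ℝ} (hf : Continuous f) {c : ℝ}
    (h : IntegrableOn f (Iic c) volume) (ξ : ℝ) : IntegrableOn f (Iic ξ) volume := by
  rcases le_or_gt ξ c with hle | hlt
  · exact h.mono_set (Iic_subset_Iic.2 hle)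
  · have : Iic ξ ⊆ Iic c ∪ Icc c ξ := by
      intro x hx
      rcases le_or_gt x c with h1 | h1
      · exact Or.inl h1
      · exact Or.inr ⟨h1.le, hx⟩
    exact (h.union (hf.integrableOn_Icc)).mono_set this

lemma ftc_Iic {f : ℝ → ℝ} (hf : Continuous f)
    (h : ∀ c : ℝ, IntegrableOn f (Iic c) volume) (x : ℝ) :
    HasDerivAt (fun y => ∫ s in Iic y, f s) (f x) x := by
  have key : ∀ y : ℝ, (∫ s in Iic y, f s) = (∫ s in Iic 0, f s) + ∫ s in (0:ℝ)..y, f s := by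
    intro y
    have := intervalIntegral.integral_Iic_sub_Iic (h 0) (h y)
    linarith [this]
  have hd : HasDerivAt (fun y => (∫ s in Iic 0, f s) + ∫ s in (0:ℝ)..y, f s) (f x) x := by
    exact (intervalIntegral.integral_hasDerivAt_right (hf.intervalIntegrable _ _)
      (hf.stronglyMeasurableAtFilter _ _) hf.continuousAt).const_add _
  exact (Filter.EventuallyEq.hasDerivAt_iff (by filter_upwards with y; rw [key y])).2 hd

lemma tendsto_integral_Iic_atBot {f : ℝ → ℝ} {c : ℝ}
    (h : IntegrableOn f (Iic c) volume) :
    Tendsto (fun ξ => ∫ s in Iic ξ, f s) atBot (nhds 0) := by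
  have heq : ∀ᶠ ξ in atBot, (∫ s in Iic ξ, f s) = ∫ s in Iic c, (Iic ξ).indicator f s := by
    filter_upwards [eventually_le_atBot c] with ξ hξ
    rw [← integral_indicator measurableSet_Iic]
    rw [← integral_indicator measurableSet_Iic]
    congr 1
    ext s
    by_cases hs : s ∈ Iic ξ
    · have : s ∈ Iic c := le_trans hs hξ
      simp [indicator_of_mem, hs, this]
    · by_cases hs' : s ∈ Iic c <;> simp [hs, hs', indicator]
  have hlim : Tendsto (fun ξ => ∫ s in Iic c, (Iic ξ).indicator f s) atBot (nhds 0) := by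
    have h0 : (∫ s in Iic c, (0:ℝ)) = 0 := by simp
    rw [← h0]
    apply tendsto_integral_filter_of_dominated_convergence (fun s => |f s|)
    · filter_upwards with ξ
      exact (h.1.indicator measurableSet_Iic)
    · filter_upwards with ξ
      filter_upwards with s
      by_cases hs : s ∈ Iic ξ <;> simp [hs, indicator, abs_nonneg]
    · exact h.abs
    · filter_upwards with s
      have : ∀ᶠ ξ in (atBot : Filter ℝ), (Iic ξ).indicator f s = 0 := by
        filter_upwards [eventually_lt_atBot s] with ξ hξ
        simp [indicator, not_le.2 hξ]
      exact Tendsto.congr' (EventuallyEq.symm this) tendsto_const_nhds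
  exact Tendsto.congr' (EventuallyEq.symm heq) hlim

namespace ShortPulseAux

variable (A : ℝ → ℝ → ℝ)

noncomputable def G2 : ℝ × ℝ → ℝ := fun p => 3 * A p.1 p.2 ^ 2 * Qd (Function.uncurry A) p
noncomputable def UU : ℝ × ℝ → ℝ := fun p => Pd (Function.uncurry A) p - G2 A p

variable {A}

lemma contDiff_G2 (hA : ContDiff ℝ (⊤ : ℕ∞) (Function.uncurry A)) : ContDiff ℝ (⊤ : ℕ∞) (G2 A) := by
  have : ContDiff ℝ (⊤ : ℕ∞) (fun p : ℝ × ℝ => 3 * Function.uncurry A p ^ 2 * Qd (Function.uncurry A) p) :=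
    (contDiff_const.mul (hA.pow 2)).mul (contDiff_Qd hA)
  exact this

lemma contDiff_UU (hA : ContDiff ℝ (⊤ : ℕ∞) (Function.uncurry A)) : ContDiff ℝ (⊤ : ℕ∞) (UU A) :=
  (contDiff_Pd hA).sub (contDiff_G2 hA)

lemma hP (hA : ContDiff ℝ (⊤ : ℕ∞) (Function.uncurry A)) (t x : ℝ) : deriv (fun t' => A t' x) t = Pd (Function.uncurry A) (t, x) :=
  (hasDerivAt_Pd hA t x).deriv

lemma hQ (hA : ContDiff ℝ (⊤ : ℕ∞) (Function.uncurry A)) (t x : ℝ) : deriv (fun x' => A t x') x = Qd (Function.uncurry A) (t, x) :=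
  (hasDerivAt_Qd hA t x).deriv

lemma hasDerivAt_cube (hA : ContDiff ℝ (⊤ : ℕ∞) (Function.uncurry A)) (t x : ℝ) :
    HasDerivAt (fun x' => (A t x') ^ 3) (G2 A (t, x)) x := by
  have h := (hasDerivAt_Qd hA t x).fun_pow 3
  exact h.congr_deriv (by simp [G2])

lemma hcube (hA : ContDiff ℝ (⊤ : ℕ∞) (Function.uncurry A)) (t x : ℝ) : deriv (fun x' => (A t x') ^ 3) x = G2 A (t, x) :=
  (hasDerivAt_cube hA t x).deriv

end ShortPulseAux

namespace ShortPulseAux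

variable {A : ℝ → ℝ → ℝ}

-- hFirst restated: Pd (uncurry A) = integral + G2
lemma hPdHA (hA : ContDiff ℝ (⊤ : ℕ∞) (Function.uncurry A))
    (hFirst : ∀ τ ξ : ℝ,
      deriv (fun t : ℝ => A t ξ) τ
        = (∫ x in Iic ξ, A τ x) + deriv (fun x : ℝ => (A τ x) ^ 3) ξ)
    (t x : ℝ) :
    Pd (Function.uncurry A) (t, x) = (∫ y in Iic x, A t y) + G2 A (t, x) := by
  rw [← hP hA, ← hcube hA]
  exact hFirst t x

lemma hUUeq (hA : ContDiff ℝ (⊤ : ℕ∞) (Function.uncurry A))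
    (hFirst : ∀ τ ξ : ℝ,
      deriv (fun t : ℝ => A t ξ) τ
        = (∫ x in Iic ξ, A τ x) + deriv (fun x : ℝ => (A τ x) ^ 3) ξ)
    (t x : ℝ) :
    (∫ y in Iic x, A t y) = UU A (t, x) := by
  have := hPdHA hA hFirst t x
  simp only [UU]
  linarith

-- hPDE restated : Qd (Pd HA) = A + Qd G2
lemma hQdPd (hA : ContDiff ℝ (⊤ : ℕ∞) (Function.uncurry A))
    (hPDE : ∀ τ ξ : ℝ,
      deriv (fun x : ℝ => deriv (fun t : ℝ => A t x) τ) ξ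
        = A τ ξ + iteratedDeriv 2 (fun x : ℝ => (A τ x) ^ 3) ξ)
    (t x : ℝ) :
    Qd (Pd (Function.uncurry A)) (t, x) = A t x + Qd (G2 A) (t, x) := by
  have h := hPDE t x
  rw [iteratedDeriv_succ, iteratedDeriv_one] at h
  rw [show deriv (fun x' : ℝ => (A t x') ^ 3) = (fun x' => G2 A (t, x')) from
    funext (hcube hA t)] at h
  rw [(hasDerivAt_Qd (contDiff_G2 hA) t x).deriv] at h
  have h2 : (fun x' : ℝ => deriv (fun t' : ℝ => A t' x') t) = fun x' => Pd (Function.uncurry A) (t, x') :=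
    funext (hP hA t)
  rw [h2] at h
  rw [(hasDerivAt_Qd (contDiff_Pd hA) t x).deriv] at h
  exact h

-- Qd UU = A
lemma hQdUU (hA : ContDiff ℝ (⊤ : ℕ∞) (Function.uncurry A))
    (hPDE : ∀ τ ξ : ℝ,
      deriv (fun x : ℝ => deriv (fun t : ℝ => A t x) τ) ξ
        = A τ ξ + iteratedDeriv 2 (fun x : ℝ => (A τ x) ^ 3) ξ)
    (t x : ℝ) :
    Qd (UU A) (t, x) = A t x := by
  have hsub : HasDerivAt (fun x' => Pd (Function.uncurry A) (t, x') - G2 A (t, x'))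
      (Qd (Pd (Function.uncurry A)) (t, x) - Qd (G2 A) (t, x)) x :=
    (hasDerivAt_Qd (contDiff_Pd hA) t x).sub (hasDerivAt_Qd (contDiff_G2 hA) t x)
  have huniq : Qd (UU A) (t, x) = Qd (Pd (Function.uncurry A)) (t, x) - Qd (G2 A) (t, x) :=
    (hasDerivAt_Qd (contDiff_UU hA) t x).unique hsub
  rw [huniq, hQdPd hA hPDE t x]
  ring

end ShortPulseAux

namespace ShortPulseAux

variable {A : ℝ → ℝ → ℝ}

lemma part1 (hA : ContDiff ℝ (⊤ : ℕ∞) (Function.uncurry A))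
    (hInt2 : ∀ (τ ξ : ℝ),
      IntegrableOn (fun x : ℝ => ∫ y in Iic x, A τ y) (Iic ξ) (volume : Measure ℝ))
    (hPDE : ∀ τ ξ : ℝ,
      deriv (fun x : ℝ => deriv (fun t : ℝ => A t x) τ) ξ
        = A τ ξ + iteratedDeriv 2 (fun x : ℝ => (A τ x) ^ 3) ξ)
    (hFirst : ∀ τ ξ : ℝ,
      deriv (fun t : ℝ => A t ξ) τ
        = (∫ x in Iic ξ, A τ x) + deriv (fun x : ℝ => (A τ x) ^ 3) ξ)
    (hdecayA : ∀ τ : ℝ, Tendsto (A τ) atBot (nhds 0))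
    (hswap : ∀ τ ξ : ℝ,
      deriv (fun t : ℝ => ∫ x in Iic ξ, A t x) τ
        = ∫ x in Iic ξ, deriv (fun t : ℝ => A t x) τ)
    (τ ξ : ℝ) :
    Pd (UU A) (τ, ξ)
      = (∫ s in Iic ξ, ∫ y in Iic s, A τ y) + (A τ ξ) ^ 3 := by
  -- the integrand of hInt2 is continuous
  have hu0eq : (fun x : ℝ => ∫ y in Iic x, A τ y) = fun x => UU A (τ, x) :=
    funext (fun x => hUUeq hA hFirst τ x)
  have hu0cont : Continuous (fun x : ℝ => ∫ y in Iic x, A τ y) := by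
    rw [hu0eq]
    exact (contDiff_UU hA).continuous.comp (Continuous.prodMk_right τ)
  -- rewriting hswap
  have hswap' : ∀ x : ℝ, Pd (UU A) (τ, x) = ∫ s in Iic x, Pd (Function.uncurry A) (τ, s) := by
    intro x
    have h := hswap τ x
    rw [show (fun t : ℝ => ∫ y in Iic x, A t y) = fun t => UU A (t, x) from
      funext (fun t => hUUeq hA hFirst t x)] at h
    rw [(hasDerivAt_Pd (contDiff_UU hA) τ x).deriv] at h
    simp only [hP hA] at h
    exact h
  have hPdcont : Continuous (fun s : ℝ => Pd (Function.uncurry A) (τ, s)) :=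
    (contDiff_Pd hA).continuous.comp (Continuous.prodMk_right τ)
  -- V tends to 0 at -∞
  have hVtend : Tendsto (fun x => Pd (UU A) (τ, x)) atBot (nhds 0) := by
    by_cases hg : IntegrableOn (fun s : ℝ => Pd (Function.uncurry A) (τ, s)) (Iic 0) volume
    · have := tendsto_integral_Iic_atBot hg
      refine Tendsto.congr (fun x => (hswap' x).symm) this
    · have hnone : ∀ x : ℝ, ¬ IntegrableOn (fun s : ℝ => Pd (Function.uncurry A) (τ, s)) (Iic x) volume :=
        fun x hx => hg (integrableOn_Iic_all hPdcont hx 0)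
    

      have hzero : ∀ x : ℝ, Pd (UU A) (τ, x) = 0 := by
        intro x
        rw [hswap' x]
        exact integral_undef (hnone x)
      rw [show (fun x => Pd (UU A) (τ, x)) = fun _ => (0:ℝ) from funext hzero]
      exact tendsto_const_nhds
  -- the function R has zero derivative
  set R : ℝ → ℝ := fun x => Pd (UU A) (τ, x) - (∫ s in Iic x, ∫ y in Iic s, A τ y) - (A τ x) ^ 3
    with hRdef
  have hRd : ∀ x : ℝ, HasDerivAt R 0 x := by
    intro x
    have h1 : HasDerivAt (fun x' => Pd (UU A) (τ, x')) (Qd (Pd (UU A)) (τ, x)) x :=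
      hasDerivAt_Qd (contDiff_Pd (contDiff_UU hA)) τ x
    have h2 : HasDerivAt (fun x' => ∫ s in Iic x', ∫ y in Iic s, A τ y)
        ((∫ y in Iic x, A τ y)) x := by
      have := ftc_Iic hu0cont (fun c => hInt2 τ c) x
      exact this
    have h3 : HasDerivAt (fun x' => (A τ x') ^ 3) (G2 A (τ, x)) x := hasDerivAt_cube hA τ x
    have hcomb := (h1.sub h2).sub h3
    have hval : Qd (Pd (UU A)) (τ, x) - (∫ y in Iic x, A τ y) - G2 A (τ, x) = 0 := by
      rw [Qd_Pd_swap (contDiff_UU hA)]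
      rw [show Qd (UU A) = Function.uncurry A from funext fun p => hQdUU hA hPDE p.1 p.2]
      rw [show Pd (Function.uncurry A) (τ, x) = (∫ y in Iic x, A τ y) + G2 A (τ, x) from
        hPdHA hA hFirst τ x]
      ring
    rw [hval] at hcomb
    exact hcomb
  have hRconst : ∀ x y : ℝ, R x = R y :=
    is_const_of_deriv_eq_zero (fun x => (hRd x).differentiableAt) (fun x => (hRd x).deriv)
  have hA3tend : Tendsto (fun x => (A τ x) ^ 3) atBot (nhds 0) := by
    have := (hdecayA τ).pow 3
    simpa using this
  have hwtend : Tendsto (fun x => ∫ s in Iic x, ∫ y in Iic s, A τ y) atBot (nhds 0) :=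
    tendsto_integral_Iic_atBot (hInt2 τ 0)
  have hRtend : Tendsto R atBot (nhds 0) := by
    have := (hVtend.sub hwtend).sub hA3tend
    simpa using this
  have hR0 : R ξ = 0 := by
    have hconst : Tendsto R atBot (nhds (R ξ)) := by
      rw [show R = fun _ => R ξ from funext (fun y => hRconst y ξ)]
      exact tendsto_const_nhds
    exact tendsto_nhds_unique hconst hRtend
  have := hR0
  rw [hRdef] at this
  simp only at this
  linarith

end ShortPulseAux

lemma iteratedDeriv_two' (f : ℝ → ℝ) : iteratedDeriv 2 f = deriv (deriv f) := by
  rw [show (2:ℕ) = 1+1 from rfl, iteratedDeriv_succ, iteratedDeriv_one]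


open ShortPulseAux

/-- For a smooth, rapidly decaying solution `A` of the short-pulse equation
`A_{ξτ} = A + (A³)_{ξξ}` with well-defined decaying antiderivatives `∂_ξ^{-1}A`
and `∂_ξ^{-2}A`, the second time derivative satisfies
`A_{ττ} = ∂_ξ^{-2}A + 3(A²)_ξ ∂_ξ^{-1}A + 4A³ + (9/5)(A⁵)_{ξξ}`. -/
theorem shortPulse_second_time_derivative
    (A : ℝ → ℝ → ℝ) (hA : ContDiff ℝ (⊤ : ℕ∞) (Function.uncurry A))
    (hInt : ∀ (τ ξ : ℝ), IntegrableOn (A τ) (Iic ξ) (volume : Measure ℝ))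
    (hInt2 : ∀ (τ ξ : ℝ),
      IntegrableOn (fun x : ℝ => ∫ y in Iic x, A τ y) (Iic ξ) (volume : Measure ℝ))
    (hPDE : ∀ τ ξ : ℝ,
      deriv (fun x : ℝ => deriv (fun t : ℝ => A t x) τ) ξ
        = A τ ξ + iteratedDeriv 2 (fun x : ℝ => (A τ x) ^ 3) ξ)
    (hFirst : ∀ τ ξ : ℝ,
      deriv (fun t : ℝ => A t ξ) τ
        = (∫ x in Iic ξ, A τ x) + deriv (fun x : ℝ => (A τ x) ^ 3) ξ)
    (hdecayA : ∀ τ : ℝ, Tendsto (A τ) atBot (nhds 0))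
    (hswap : ∀ τ ξ : ℝ,
      deriv (fun t : ℝ => ∫ x in Iic ξ, A t x) τ
        = ∫ x in Iic ξ, deriv (fun t : ℝ => A t x) τ) :
    ∀ τ ξ : ℝ,
      iteratedDeriv 2 (fun t : ℝ => A t ξ) τ
        = (∫ x in Iic ξ, ∫ y in Iic x, A τ y)
          + 3 * deriv (fun x : ℝ => (A τ x) ^ 2) ξ * (∫ x in Iic ξ, A τ x)
          + 4 * (A τ ξ) ^ 3
          + (9 / 5) * iteratedDeriv 2 (fun x : ℝ => (A τ x) ^ 5) ξ := by
  intro τ ξ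
  simp only [iteratedDeriv_two']
  -- names for the basic quantities
  -- LHS transformation
  rw [show deriv (fun t : ℝ => A t ξ) = fun t => Pd (Function.uncurry A) (t, ξ) from
    funext fun t => hP hA t ξ]
  rw [show (fun t : ℝ => Pd (Function.uncurry A) (t, ξ))
      = fun t => UU A (t, ξ) + G2 A (t, ξ) from funext fun t => by simp [UU]]
  rw [((hasDerivAt_Pd (contDiff_UU hA) τ ξ).fun_add (hasDerivAt_Pd (contDiff_G2 hA) τ ξ)).deriv]
  rw [part1 hA hInt2 hPDE hFirst hdecayA hswap τ ξ]
  -- compute Pd (G2 A)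
  have hA_t : HasDerivAt (fun t' => A t' ξ) (Pd (Function.uncurry A) (τ, ξ)) τ :=
    hasDerivAt_Pd hA τ ξ
  have hQ_t := hasDerivAt_Pd (contDiff_Qd hA) τ ξ
  have hA_x : HasDerivAt (fun x' => A τ x') (Qd (Function.uncurry A) (τ, ξ)) ξ :=
    hasDerivAt_Qd hA τ ξ
  have hQ_x := hasDerivAt_Qd (contDiff_Qd hA) τ ξ
  have hPdG2 : Pd (G2 A) (τ, ξ)
      = 6 * A τ ξ * Pd (Function.uncurry A) (τ, ξ) * Qd (Function.uncurry A) (τ, ξ)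
        + 3 * A τ ξ ^ 2 * Pd (Qd (Function.uncurry A)) (τ, ξ) := by
    have hprod := ((hA_t.fun_pow 2).const_mul (3:ℝ)).fun_mul hQ_t
    have := (hasDerivAt_Pd (contDiff_G2 hA) τ ξ).unique hprod
    rw [this]; push_cast; ring
  have hQdG2 : Qd (G2 A) (τ, ξ)
      = 6 * A τ ξ * Qd (Function.uncurry A) (τ, ξ) ^ 2
        + 3 * A τ ξ ^ 2 * Qd (Qd (Function.uncurry A)) (τ, ξ) := by
    have hprod := ((hA_x.fun_pow 2).const_mul (3:ℝ)).fun_mul hQ_x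
    have := (hasDerivAt_Qd (contDiff_G2 hA) τ ξ).unique hprod
    rw [this]; push_cast; ring
  have hmix : Pd (Qd (Function.uncurry A)) (τ, ξ)
      = A τ ξ + Qd (G2 A) (τ, ξ) := by
    rw [← Qd_Pd_swap hA (τ, ξ)]
    exact hQdPd hA hPDE τ ξ
  have hPdHAval : Pd (Function.uncurry A) (τ, ξ)
      = (∫ y in Iic ξ, A τ y) + 3 * A τ ξ ^ 2 * Qd (Function.uncurry A) (τ, ξ) := by
    rw [hPdHA hA hFirst τ ξ]; rfl
  -- RHS derivative computations
  have hsq : deriv (fun x : ℝ => (A τ x) ^ 2) ξ = 2 * A τ ξ * Qd (Function.uncurry A) (τ, ξ) := by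
    rw [(hA_x.fun_pow 2).deriv]; push_cast; ring
  have h5 : deriv (fun x : ℝ => (A τ x) ^ 5)
      = fun x => 5 * (A τ x) ^ 4 * Qd (Function.uncurry A) (τ, x) := by
    funext x
    have hx : HasDerivAt (fun x' => A τ x') (Qd (Function.uncurry A) (τ, x)) x :=
      hasDerivAt_Qd hA τ x
    rw [(hx.fun_pow 5).deriv]; push_cast; ring
  have h5' : deriv (fun x : ℝ => 5 * (A τ x) ^ 4 * Qd (Function.uncurry A) (τ, x)) ξ
      = 20 * A τ ξ ^ 3 * Qd (Function.uncurry A) (τ, ξ) ^ 2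
        + 5 * A τ ξ ^ 4 * Qd (Qd (Function.uncurry A)) (τ, ξ) := by
    rw [(((hA_x.fun_pow 4).const_mul (5:ℝ)).fun_mul hQ_x).deriv]; push_cast; ring
  rw [h5, h5', hsq, hPdG2, hmix, hQdG2, hPdHAval]
  ring
end

section
/- Let E: [0,T] → ℝ be continuous, nonnegative, with E(τ) + Ẽ(τ) = E(0) + Ẽ(0) + ∫₀^τ J(τ')dτ', where |Ẽ(τ)| ≤ C(εE + δ²E + δεE^{3/2} + ε²E²) and |J(τ)| ≤ C(δE^{1/2} + δ²E + δE^{3/2} + εE²) on [0,T]. Then for sufficiently small δ > 0 there exists ε₀ > 0 such that for all ε ∈ (0,ε₀) there exist constants C₀, C₁ > 0 (independent of ε) with E(τ) ≤ C₀(E(0) + δT)e^{C₁δT} for all τ ∈ [0,T], provided E(0) = O(1) as ε → 0. -/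
open MeasureTheory Set intervalIntegral

private lemma aux_Et_bound (C M δ ε x : ℝ) (hC : 0 ≤ C) (hM : 1 ≤ M)
    (hδ0 : 0 ≤ δ) (hδ1 : δ ≤ 1) (hε0 : 0 ≤ ε) (hε1 : ε ≤ 1)
    (hx0 : 0 ≤ x) (hx : x ≤ M) :
    C * (ε * x + δ ^ 2 * x + δ * ε * (x * Real.sqrt x) + ε ^ 2 * x ^ 2)
      ≤ 4 * C * (δ + ε) * M ^ 2 := by
  have hs0 : 0 ≤ Real.sqrt x := Real.sqrt_nonneg x
  have hs : Real.sqrt x ≤ M := by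
    rw [show M = Real.sqrt (M ^ 2) from (Real.sqrt_sq (by linarith)).symm]
    exact Real.sqrt_le_sqrt (by nlinarith)
  have hxM2 : x ≤ M ^ 2 := by nlinarith
  have hxs : x * Real.sqrt x ≤ M ^ 2 := by nlinarith
  have hx2 : x ^ 2 ≤ M ^ 2 := by nlinarith
  have t1 : ε * x ≤ ε * M ^ 2 := by nlinarith
  have t2 : δ ^ 2 * x ≤ δ * M ^ 2 := by
    nlinarith [mul_nonneg (mul_nonneg hδ0 (sub_nonneg.2 hδ1)) hx0,
      mul_le_mul_of_nonneg_left hxM2 hδ0]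
  have t3 : δ * ε * (x * Real.sqrt x) ≤ ε * M ^ 2 := by
    nlinarith [mul_nonneg (mul_nonneg (sub_nonneg.2 hδ1) hε0) (mul_nonneg hx0 hs0),
      mul_le_mul_of_nonneg_left hxs hε0]
  have t4 : ε ^ 2 * x ^ 2 ≤ ε * M ^ 2 := by
    nlinarith [mul_le_mul_of_nonneg_left hx2 hε0,
      mul_nonneg (mul_nonneg (sub_nonneg.2 hε1) hε0) (mul_nonneg hx0 hx0)]
  have key : ε * x + δ ^ 2 * x + δ * ε * (x * Real.sqrt x) + ε ^ 2 * x ^ 2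
      ≤ 4 * (δ + ε) * M ^ 2 := by
    have hM2 : 0 ≤ M ^ 2 := by positivity
    nlinarith [mul_nonneg hδ0 hM2]
  calc C * (ε * x + δ ^ 2 * x + δ * ε * (x * Real.sqrt x) + ε ^ 2 * x ^ 2)
      ≤ C * (4 * (δ + ε) * M ^ 2) := mul_le_mul_of_nonneg_left key hC
    _ = 4 * C * (δ + ε) * M ^ 2 := by ring

private lemma aux_J_bound (C M δ ε x : ℝ) (hC : 0 ≤ C) (hM : 1 ≤ M)
    (hδ0 : 0 ≤ δ) (hδ1 : δ ≤ 1) (hε0 : 0 ≤ ε) (hε1 : ε ≤ 1)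
    (hx0 : 0 ≤ x) (hx : x ≤ M) :
    C * (δ * Real.sqrt x + δ ^ 2 * x + δ * (x * Real.sqrt x) + ε * x ^ 2)
      ≤ 4 * C * (δ + ε) * M ^ 2 := by
  have hs0 : 0 ≤ Real.sqrt x := Real.sqrt_nonneg x
  have hs : Real.sqrt x ≤ M := by
    rw [show M = Real.sqrt (M ^ 2) from (Real.sqrt_sq (by linarith)).symm]
    exact Real.sqrt_le_sqrt (by nlinarith)
  have hxM2 : x ≤ M ^ 2 := by nlinarith
  have hxs : x * Real.sqrt x ≤ M ^ 2 := by nlinarith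
  have hx2 : x ^ 2 ≤ M ^ 2 := by nlinarith
  have hsM2 : Real.sqrt x ≤ M ^ 2 := by nlinarith
  have t1 : δ * Real.sqrt x ≤ δ * M ^ 2 := by nlinarith
  have t2 : δ ^ 2 * x ≤ δ * M ^ 2 := by
    nlinarith [mul_nonneg (mul_nonneg hδ0 (sub_nonneg.2 hδ1)) hx0,
      mul_le_mul_of_nonneg_left hxM2 hδ0]
  have t3 : δ * (x * Real.sqrt x) ≤ δ * M ^ 2 := by
    exact mul_le_mul_of_nonneg_left hxs hδ0
  have t4 : ε * x ^ 2 ≤ ε * M ^ 2 := by nlinarith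
  have key : δ * Real.sqrt x + δ ^ 2 * x + δ * (x * Real.sqrt x) + ε * x ^ 2
      ≤ 4 * (δ + ε) * M ^ 2 := by
    have hM2 : 0 ≤ M ^ 2 := by positivity
    nlinarith [mul_nonneg hε0 hM2]
  calc C * (δ * Real.sqrt x + δ ^ 2 * x + δ * (x * Real.sqrt x) + ε * x ^ 2)
      ≤ C * (4 * (δ + ε) * M ^ 2) := mul_le_mul_of_nonneg_left key hC
    _ = 4 * C * (δ + ε) * M ^ 2 := by ring

/-- Continuation/Gronwall argument for the energy of the error term.  Given the
identity `E(τ) + Ẽ(τ) = E(0) + Ẽ(0) + ∫₀^τ J` with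
`|Ẽ| ≤ C(εE + δ²E + δεE^{3/2} + ε²E²)` and
`|J| ≤ C(δE^{1/2} + δ²E + δE^{3/2} + εE²)` on `[0,T]`, and provided `E(0) = O(1)`
(i.e. `E(0) ≤ K` for a fixed constant `K`), then for sufficiently small `δ > 0`
there is `ε₀ > 0` and `ε`-independent constants `C₀, C₁ > 0` such that for all
`ε ∈ (0,ε₀)`, `E(τ) ≤ C₀(E(0) + δT)e^{C₁δT}` on `[0,T]`. -/
theorem energy_continuation_gronwall
    (C T K : ℝ) (hC : 0 < C) (hT : 0 < T) (hK : 0 < K) :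
    ∃ δ₀ : ℝ, 0 < δ₀ ∧
      ∀ δ : ℝ, 0 < δ → δ < δ₀ →
        ∃ ε₀ C₀ C₁ : ℝ, 0 < ε₀ ∧ 0 < C₀ ∧ 0 < C₁ ∧
          ∀ ε : ℝ, 0 < ε → ε < ε₀ →
            ∀ E Et J : ℝ → ℝ,
              ContinuousOn E (Icc 0 T) →
              (∀ τ ∈ Icc (0:ℝ) T, 0 ≤ E τ) →
              E 0 ≤ K →
              IntervalIntegrable J (volume : Measure ℝ) 0 T →
              (∀ τ ∈ Icc (0:ℝ) T,
                E τ + Et τ = E 0 + Et 0 + ∫ τ' in (0:ℝ)..τ, J τ') →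
              (∀ τ ∈ Icc (0:ℝ) T,
                |Et τ| ≤ C * (ε * E τ + δ ^ 2 * E τ
                  + δ * ε * (E τ * Real.sqrt (E τ)) + ε ^ 2 * (E τ) ^ 2)) →
              (∀ τ ∈ Icc (0:ℝ) T,
                |J τ| ≤ C * (δ * Real.sqrt (E τ) + δ ^ 2 * E τ
                  + δ * (E τ * Real.sqrt (E τ)) + ε * (E τ) ^ 2)) →
              ∀ τ ∈ Icc (0:ℝ) T,
                E τ ≤ C₀ * (E 0 + δ * T) * Real.exp (C₁ * δ * T) := by
  set M : ℝ := K + 2 with hMdef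
  have hM1 : (1:ℝ) ≤ M := by simp only [hMdef]; linarith
  have hM0 : (0:ℝ) < M := by linarith
  set D : ℝ := (8 * C + 4 * C * T) * M ^ 2 with hDdef
  have hD0 : (0:ℝ) < D := by
    have : 0 < 8 * C + 4 * C * T := by positivity
    positivity
  refine ⟨min 1 (1 / (2 * D)), lt_min one_pos (by positivity), ?_⟩
  intro δ hδ0 hδlt
  have hδ1 : δ ≤ 1 := le_of_lt (lt_of_lt_of_le hδlt (min_le_left _ _))
  have hδD : δ < 1 / (2 * D) := lt_of_lt_of_le hδlt (min_le_right _ _)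
  refine ⟨min 1 (1 / (2 * D)), M / (δ * T), 1, lt_min one_pos (by positivity),
    by positivity, one_pos, ?_⟩
  intro ε hε0 hεlt E Et J hEcont hEnn hE0K hJint hId hEt hJ τ hτ
  have hε1 : ε ≤ 1 := le_of_lt (lt_of_lt_of_le hεlt (min_le_left _ _))
  have hεD : ε < 1 / (2 * D) := lt_of_lt_of_le hεlt (min_le_right _ _)
  have h0T : (0:ℝ) ∈ Icc (0:ℝ) T := ⟨le_refl 0, hT.le⟩
  have hsmall : D * (δ + ε) < 1 := by
    have h1 : δ * (2 * D) < 1 := (lt_div_iff₀ (by positivity)).mp hδD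
    have h2 : ε * (2 * D) < 1 := (lt_div_iff₀ (by positivity)).mp hεD
    nlinarith
  -- key a priori estimate
  have hkey : ∀ t ∈ Icc (0:ℝ) T, (∀ s ∈ Icc (0:ℝ) t, E s ≤ M) →
      E t ≤ K + D * (δ + ε) := by
    intro t ht hEle
    have h0t : (0:ℝ) ∈ Icc (0:ℝ) t := ⟨le_refl 0, ht.1⟩
    have hEt_t : |Et t| ≤ 4 * C * (δ + ε) * M ^ 2 :=
      (hEt t ht).trans (aux_Et_bound C M δ ε (E t) hC.le hM1 hδ0.le hδ1 hε0.le hε1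
        (hEnn t ht) (hEle t ⟨ht.1, le_rfl⟩))
    have hEt_0 : |Et 0| ≤ 4 * C * (δ + ε) * M ^ 2 :=
      (hEt 0 h0T).trans (aux_Et_bound C M δ ε (E 0) hC.le hM1 hδ0.le hδ1 hε0.le hε1
        (hEnn 0 h0T) (hEle 0 h0t))
    have hInt : |∫ τ' in (0:ℝ)..t, J τ'| ≤ 4 * C * (δ + ε) * M ^ 2 * T := by
      have hb : ∀ x ∈ Set.uIoc (0:ℝ) t, ‖J x‖ ≤ 4 * C * (δ + ε) * M ^ 2 := by
        intro x hx
        rw [Set.uIoc_of_le ht.1] at hx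
        have hxT : x ∈ Icc (0:ℝ) T := ⟨hx.1.le, hx.2.trans ht.2⟩
        have hxt : x ∈ Icc (0:ℝ) t := ⟨hx.1.le, hx.2⟩
        rw [Real.norm_eq_abs]
        exact (hJ x hxT).trans (aux_J_bound C M δ ε (E x) hC.le hM1 hδ0.le hδ1
          hε0.le hε1 (hEnn x hxT) (hEle x hxt))
      have h1 : ‖∫ τ' in (0:ℝ)..t, J τ'‖ ≤ 4 * C * (δ + ε) * M ^ 2 * |t - 0| :=
        intervalIntegral.norm_integral_le_of_norm_le_const hb
      rw [Real.norm_eq_abs] at h1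
      have h2 : |t - 0| ≤ T := by
        rw [sub_zero, abs_of_nonneg ht.1]; exact ht.2
      have h3 : 0 ≤ 4 * C * (δ + ε) * M ^ 2 := by positivity
      calc |∫ τ' in (0:ℝ)..t, J τ'| ≤ 4 * C * (δ + ε) * M ^ 2 * |t - 0| := h1
        _ ≤ 4 * C * (δ + ε) * M ^ 2 * T := mul_le_mul_of_nonneg_left h2 h3
    have hid := hId t ht
    have hA := abs_le.mp hEt_t
    have hB := abs_le.mp hEt_0
    have hI := abs_le.mp hInt
    have hDexp : D * (δ + ε) = 4 * C * (δ + ε) * M ^ 2 + 4 * C * (δ + ε) * M ^ 2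
        + 4 * C * (δ + ε) * M ^ 2 * T := by
      simp only [hDdef]; ring
    linarith [hA.1, hA.2, hB.1, hB.2, hI.1, hI.2]
  -- global bound via continuation (intermediate value theorem)
  have hglobal : ∀ t ∈ Icc (0:ℝ) T, E t < M := by
    by_contra hcon
    push_neg at hcon
    obtain ⟨t₀, ht₀, hMt₀⟩ := hcon
    set B : Set ℝ := {t | t ∈ Icc (0:ℝ) T ∧ M ≤ E t} with hBdef
    have hBne : B.Nonempty := ⟨t₀, ht₀, hMt₀⟩
    have hBbdd : BddBelow B := ⟨0, fun t ht => ht.1.1⟩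
    have hBclosed : IsClosed B := by
      have : B = Icc (0:ℝ) T ∩ E ⁻¹' (Ici M) := by
        ext t; simp [hBdef, Set.mem_setOf_eq, and_comm]
      rw [this]
      exact hEcont.preimage_isClosed_of_isClosed isClosed_Icc isClosed_Ici
    set τ' : ℝ := sInf B with hτ'def
    have hτ'B : τ' ∈ B := hBclosed.csInf_mem hBne hBbdd
    have hτ'T : τ' ∈ Icc (0:ℝ) T := hτ'B.1
    have hMτ' : M ≤ E τ' := hτ'B.2
    have hE0lt : E 0 < M := by simp only [hMdef]; linarith
    have hcont' : ContinuousOn E (Icc 0 τ') :=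
      hEcont.mono (Icc_subset_Icc le_rfl hτ'T.2)
    have hsub : Icc (E 0) (E τ') ⊆ E '' Icc 0 τ' :=
      intermediate_value_Icc hτ'T.1 hcont'
    have hK1mem : (K + 1) ∈ Icc (E 0) (E τ') := ⟨by linarith, by
      simp only [hMdef] at hMτ'; linarith⟩
    obtain ⟨t₁, ht₁, hEt₁⟩ := hsub hK1mem
    have ht₁lt : t₁ < τ' := by
      rcases lt_or_eq_of_le ht₁.2 with h | h
      · exact h
      · exfalso; rw [h] at hEt₁
        simp only [hMdef] at hMτ'; linarith
    have hEle : ∀ s ∈ Icc (0:ℝ) t₁, E s ≤ M := by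
      intro s hs
      by_contra h
      push_neg at h
      have hsB : s ∈ B := ⟨⟨hs.1, le_trans hs.2 (le_trans ht₁.2 hτ'T.2)⟩, h.le⟩
      have : τ' ≤ s := csInf_le hBbdd hsB
      linarith [hs.2]
    have ht₁T : t₁ ∈ Icc (0:ℝ) T := ⟨ht₁.1, le_trans ht₁.2 hτ'T.2⟩
    have := hkey t₁ ht₁T hEle
    rw [hEt₁] at this
    linarith
  -- conclude
  have hEτ : E τ ≤ M := (hglobal τ hτ).le
  have hE00 : 0 ≤ E 0 := hEnn 0 h0T
  have hexp : 1 ≤ Real.exp (1 * δ * T) := Real.one_le_exp (by positivity)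
  have hδT : 0 < δ * T := by positivity
  calc E τ ≤ M := hEτ
    _ = M / (δ * T) * (δ * T) := by field_simp
    _ ≤ M / (δ * T) * (E 0 + δ * T) := by
        apply mul_le_mul_of_nonneg_left (by linarith) (by positivity)
    _ ≤ M / (δ * T) * (E 0 + δ * T) * Real.exp (1 * δ * T) :=
        le_mul_of_one_le_right (by positivity) hexp
end

section
/- Let A be smooth with A(τ,·), A_τ(τ,·) ∈ L^∞ and A_ξ(τ,·), A_{ξξ}(τ,·), A_{ττ}(τ,·) ∈ L² uniformly bounded by δ on [0,T], and let R with energy E = ∫(R² + R_ξ² + R_{ξξ}² + 2ε²R_τ² + ε⁴R_{ττ}²)dξ < ∞ satisfy R_{ξτ} = R + ε²R_{ττ} + (3A²R + 3εAR² + ε²R³)_{ξξ} + εA_{ττ}. Then there is an (ε,δ)-independent constant C > 0 such that ‖R_{ξτ}‖_{L²} ≤ C(δε + E^{1/2} + δ²E^{1/2} + δεE + ε²E^{3/2}) for all sufficiently small ε > 0. -/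
open MeasureTheory Set

/-- The energy of the error term
`E = ∫ (R² + R_ξ² + R_{ξξ}² + 2ε²R_τ² + ε⁴R_{ττ}²) dξ`. -/
noncomputable def errEnergy (ε : ℝ) (R : ℝ → ℝ → ℝ) (τ : ℝ) : ℝ :=
  ∫ ξ : ℝ,
    ((R τ ξ) ^ 2 + (deriv (fun y : ℝ => R τ y) ξ) ^ 2
      + (iteratedDeriv 2 (fun y : ℝ => R τ y) ξ) ^ 2
      + 2 * ε ^ 2 * (deriv (fun r : ℝ => R r ξ) τ) ^ 2
      + ε ^ 4 * (iteratedDeriv 2 (fun r : ℝ => R r ξ) τ) ^ 2)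



noncomputable def pt (A : ℝ → ℝ → ℝ) : ℝ → ℝ → ℝ :=
  fun τ ξ => fderiv ℝ (Function.uncurry A) (τ, ξ) (1, 0)

noncomputable def px (A : ℝ → ℝ → ℝ) : ℝ → ℝ → ℝ :=
  fun τ ξ => fderiv ℝ (Function.uncurry A) (τ, ξ) (0, 1)

lemma contDiff_pt {A : ℝ → ℝ → ℝ} (hA : ContDiff ℝ (⊤ : ℕ∞) (Function.uncurry A)) :
    ContDiff ℝ (⊤ : ℕ∞) (Function.uncurry (pt A)) := by
  have h1 : ContDiff ℝ (⊤ : ℕ∞) (fderiv ℝ (Function.uncurry A)) := hA.fderiv_right (by simp)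
  exact (ContinuousLinearMap.apply ℝ ℝ ((1:ℝ), (0:ℝ))).contDiff.comp h1

lemma contDiff_px {A : ℝ → ℝ → ℝ} (hA : ContDiff ℝ (⊤ : ℕ∞) (Function.uncurry A)) :
    ContDiff ℝ (⊤ : ℕ∞) (Function.uncurry (px A)) := by
  have h1 : ContDiff ℝ (⊤ : ℕ∞) (fderiv ℝ (Function.uncurry A)) := hA.fderiv_right (by simp)
  exact (ContinuousLinearMap.apply ℝ ℝ ((0:ℝ), (1:ℝ))).contDiff.comp h1

lemma hasDerivAt_pt {A : ℝ → ℝ → ℝ} (hA : ContDiff ℝ (⊤ : ℕ∞) (Function.uncurry A)) (τ ξ : ℝ) :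
    HasDerivAt (fun s => A s ξ) (pt A τ ξ) τ := by
  have hc : HasDerivAt (fun s : ℝ => (s, ξ)) ((1:ℝ), (0:ℝ)) τ :=
    (hasDerivAt_id τ).prodMk (hasDerivAt_const τ ξ)
  exact ((hA.differentiable (by simp) (τ, ξ)).hasFDerivAt.comp_hasDerivAt τ hc)

lemma hasDerivAt_px {A : ℝ → ℝ → ℝ} (hA : ContDiff ℝ (⊤ : ℕ∞) (Function.uncurry A)) (τ ξ : ℝ) :
    HasDerivAt (fun y => A τ y) (px A τ ξ) ξ := by
  have hc : HasDerivAt (fun y : ℝ => (τ, y)) ((0:ℝ), (1:ℝ)) ξ :=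
    (hasDerivAt_const ξ τ).prodMk (hasDerivAt_id ξ)
  exact ((hA.differentiable (by simp) (τ, ξ)).hasFDerivAt.comp_hasDerivAt ξ hc)

lemma deriv_slice_t {A : ℝ → ℝ → ℝ} (hA : ContDiff ℝ (⊤ : ℕ∞) (Function.uncurry A)) (τ ξ : ℝ) :
    deriv (fun s => A s ξ) τ = pt A τ ξ := (hasDerivAt_pt hA τ ξ).deriv

lemma deriv_slice_x {A : ℝ → ℝ → ℝ} (hA : ContDiff ℝ (⊤ : ℕ∞) (Function.uncurry A)) (τ ξ : ℝ) :
    deriv (fun y => A τ y) ξ = px A τ ξ := (hasDerivAt_px hA τ ξ).deriv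

lemma iteratedDeriv2_t {A : ℝ → ℝ → ℝ} (hA : ContDiff ℝ (⊤ : ℕ∞) (Function.uncurry A)) (τ ξ : ℝ) :
    iteratedDeriv 2 (fun s => A s ξ) τ = pt (pt A) τ ξ := by
  rw [iteratedDeriv_succ, iteratedDeriv_one]
  have : deriv (fun s => A s ξ) = fun s => pt A s ξ :=
    funext fun s => (hasDerivAt_pt hA s ξ).deriv
  rw [this]
  exact (hasDerivAt_pt (contDiff_pt hA) τ ξ).deriv

lemma iteratedDeriv2_x {A : ℝ → ℝ → ℝ} (hA : ContDiff ℝ (⊤ : ℕ∞) (Function.uncurry A)) (τ ξ : ℝ) :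
    iteratedDeriv 2 (fun y => A τ y) ξ = px (px A) τ ξ := by
  rw [iteratedDeriv_succ, iteratedDeriv_one]
  have : deriv (fun y => A τ y) = fun y => px A τ y :=
    funext fun y => (hasDerivAt_px hA τ y).deriv
  rw [this]
  exact (hasDerivAt_px (contDiff_px hA) τ ξ).deriv

lemma cont_slice {A : ℝ → ℝ → ℝ} (hA : ContDiff ℝ (⊤ : ℕ∞) (Function.uncurry A)) (τ : ℝ) :
    Continuous (fun ξ => A τ ξ) :=
  hA.continuous.comp (continuous_const.prodMk continuous_id)

lemma abs_mul3_le (c u v w bu bv : ℝ) (hc : 0 ≤ c) (hu : |u| ≤ bu) (hv : |v| ≤ bv) :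
    |c * u * v * w| ≤ (c * bu * bv) * |w| := by
  have h0u := abs_nonneg u
  have h0v := abs_nonneg v
  have h1 : |c * u * v * w| = c * (|u| * |v|) * |w| := by
    rw [abs_mul, abs_mul, abs_mul, abs_of_nonneg hc]; ring
  have h2 : |u| * |v| ≤ bu * bv := mul_le_mul hu hv h0v (h0u.trans hu)
  rw [h1]
  calc c * (|u| * |v|) * |w| ≤ c * (bu * bv) * |w| :=
        mul_le_mul_of_nonneg_right (mul_le_mul_of_nonneg_left h2 hc) (abs_nonneg w)
    _ = (c * bu * bv) * |w| := by ring

lemma int_sq_le (f g : ℝ → ℝ) (c : ℝ)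
    (hg : Integrable (fun x => (g x)^2) (volume : Measure ℝ))
    (h : ∀ x, |f x| ≤ c * |g x|) :
    (∫ x : ℝ, (f x)^2) ≤ c^2 * ∫ x : ℝ, (g x)^2 := by
  rw [← integral_const_mul]
  refine integral_mono_of_nonneg (Filter.Eventually.of_forall fun x => sq_nonneg _)
    (hg.const_mul (c^2)) (Filter.Eventually.of_forall fun x => ?_)
  show (f x)^2 ≤ c^2 * (g x)^2
  have hx := h x
  nlinarith [mul_self_le_mul_self (abs_nonneg (f x)) hx, sq_abs (f x), sq_abs (g x)]

lemma sq_int_of_dom (f g : ℝ → ℝ) (c : ℝ)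
    (hf : AEStronglyMeasurable f (volume : Measure ℝ))
    (hg : Integrable (fun x => (g x)^2) (volume : Measure ℝ))
    (h : ∀ x, |f x| ≤ c * |g x|) :
    Integrable (fun x => (f x)^2) (volume : Measure ℝ) := by
  refine (hg.const_mul (c^2)).mono' (hf.pow 2) (Filter.Eventually.of_forall fun x => ?_)
  have hx := h x
  show ‖(f x)^2‖ ≤ c^2 * (g x)^2
  rw [Real.norm_eq_abs, abs_of_nonneg (sq_nonneg _)]
  nlinarith [mul_self_le_mul_self (abs_nonneg (f x)) hx, sq_abs (f x), sq_abs (g x)]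

set_option maxHeartbeats 2000000 in
lemma sq_sum13 (x1 x2 x3 y1 y2 y3 y4 y5 y6 y7 y8 y9 y10 : ℝ) :
    (x1 + x2 + (y1+y2+y3+y4+y5+y6+y7+y8+y9+y10) + x3)^2
      ≤ 20*(x1^2+x2^2+x3^2+y1^2+y2^2+y3^2+y4^2+y5^2+y6^2+y7^2+y8^2+y9^2+y10^2) := by
  have hu : (x1+x2+x3)^2 ≤ 3*(x1^2+x2^2+x3^2) := by
    nlinarith [sq_nonneg (x1-x2), sq_nonneg (x1-x3), sq_nonneg (x2-x3)]
  have hv : (y1+y2+y3+y4+y5)^2 ≤ 5*(y1^2+y2^2+y3^2+y4^2+y5^2) := by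
    nlinarith [sq_nonneg (y1-y2), sq_nonneg (y1-y3), sq_nonneg (y1-y4), sq_nonneg (y1-y5),
      sq_nonneg (y2-y3), sq_nonneg (y2-y4), sq_nonneg (y2-y5),
      sq_nonneg (y3-y4), sq_nonneg (y3-y5), sq_nonneg (y4-y5)]
  have hw : (y6+y7+y8+y9+y10)^2 ≤ 5*(y6^2+y7^2+y8^2+y9^2+y10^2) := by
    nlinarith [sq_nonneg (y6-y7), sq_nonneg (y6-y8), sq_nonneg (y6-y9), sq_nonneg (y6-y10),
      sq_nonneg (y7-y8), sq_nonneg (y7-y9), sq_nonneg (y7-y10),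
      sq_nonneg (y8-y9), sq_nonneg (y8-y10), sq_nonneg (y9-y10)]
  have three_sq : ∀ a b c : ℝ, (a+b+c)^2 ≤ 3*(a^2+b^2+c^2) := by
    intro a b c
    nlinarith [sq_nonneg (a-b), sq_nonneg (a-c), sq_nonneg (b-c)]
  calc (x1 + x2 + (y1+y2+y3+y4+y5+y6+y7+y8+y9+y10) + x3)^2
      = ((x1+x2+x3) + (y1+y2+y3+y4+y5) + (y6+y7+y8+y9+y10))^2 := by ring
    _ ≤ 3*((x1+x2+x3)^2 + (y1+y2+y3+y4+y5)^2 + (y6+y7+y8+y9+y10)^2) := three_sq _ _ _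
    _ ≤ 20*(x1^2+x2^2+x3^2+y1^2+y2^2+y3^2+y4^2+y5^2+y6^2+y7^2+y8^2+y9^2+y10^2) := by
        nlinarith [hu, hv, hw, sq_nonneg x1, sq_nonneg x2, sq_nonneg x3, sq_nonneg y1,
          sq_nonneg y2, sq_nonneg y3, sq_nonneg y4, sq_nonneg y5, sq_nonneg y6,
          sq_nonneg y7, sq_nonneg y8, sq_nonneg y9, sq_nonneg y10]

lemma int_sq_bound (f g : ℝ → ℝ) (K b M' : ℝ) (hK : 0 ≤ K) (hb : 0 ≤ b)
    (hg : Integrable (fun x => (g x)^2) (volume : Measure ℝ))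
    (hgb : (∫ x : ℝ, (g x)^2) ≤ b^2)
    (habs : ∀ x, |f x| ≤ K * |g x|) (hKb : K * b ≤ M') :
    (∫ x : ℝ, (f x)^2) ≤ M'^2 := by
  have h1 := int_sq_le f g K hg habs
  have h2 : K^2 * (∫ x : ℝ, (g x)^2) ≤ K^2 * b^2 :=
    mul_le_mul_of_nonneg_left hgb (sq_nonneg K)
  have h4 : (K*b)^2 ≤ M'^2 := by nlinarith [mul_nonneg hK hb]
  nlinarith

lemma sobolev_bound (f f' : ℝ → ℝ) (hd : ∀ x, HasDerivAt f (f' x) x)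
    (hfc : Continuous f) (hf'c : Continuous f')
    (hf2 : Integrable (fun x => (f x)^2) (volume : Measure ℝ))
    (hf'2 : Integrable (fun x => (f' x)^2) (volume : Measure ℝ)) (x : ℝ) :
    (f x)^2 ≤ 2 * (∫ t : ℝ, (f t)^2) + (∫ t : ℝ, (f' t)^2) := by
  set h : ℝ → ℝ := fun t => 2 * f t * f' t with hh
  have hhc : Continuous h := by continuity
  have hbound : ∀ t, |h t| ≤ (f t)^2 + (f' t)^2 := by
    intro t
    rw [abs_le]
    simp only [hh]
    constructor
    · nlinarith [sq_nonneg (f t + f' t)]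
    · nlinarith [sq_nonneg (f t - f' t)]
  have hsum : Integrable (fun t => (f t)^2 + (f' t)^2) (volume : Measure ℝ) := hf2.add hf'2
  have hhint : Integrable h (volume : Measure ℝ) :=
    hsum.mono' hhc.aestronglyMeasurable (Filter.Eventually.of_forall hbound)
  have habsint : Integrable (fun t => |h t|) (volume : Measure ℝ) := hhint.abs
  set K : ℝ := (∫ t : ℝ, (f t)^2) + (∫ t : ℝ, (f' t)^2) with hK
  have habsK : (∫ t : ℝ, |h t|) ≤ K := by
    rw [hK, ← integral_add hf2 hf'2]
    exact integral_mono habsint hsum hbound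
  -- FTC
  have hftc : ∀ y : ℝ, (∫ t in x..y, h t) = (f y)^2 - (f x)^2 := by
    intro y
    have hder : ∀ t ∈ uIcc x y, HasDerivAt (fun s => (f s)^2) (h t) t := by
      intro t _
      have h2 := (hd t).pow 2
      have : ((2:ℕ) : ℝ) * f t ^ (2-1) * f' t = h t := by simp [hh]
      rwa [this] at h2
    exact intervalIntegral.integral_eq_sub_of_hasDerivAt hder (hhc.intervalIntegrable x y)
  have key : ∀ y, x ≤ y → y ≤ x + 1 → (f x)^2 ≤ (f y)^2 + K := by
    intro y hxy _
    have h1 : |∫ t in x..y, h t| ≤ ∫ t in x..y, |h t| :=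
      intervalIntegral.abs_integral_le_integral_abs hxy
    have h2 : (∫ t in x..y, |h t|) ≤ ∫ t : ℝ, |h t| := by
      rw [intervalIntegral.integral_of_le hxy]
      exact setIntegral_le_integral habsint (Filter.Eventually.of_forall fun t => abs_nonneg _)
    have := hftc y
    have h3 : |(f y)^2 - (f x)^2| ≤ K := by
      rw [← this]; exact h1.trans (h2.trans habsK)
    have := abs_le.mp h3
    linarith [this.1]
  -- integrate over y ∈ [x, x+1]
  have hconst : (∫ y in x..(x+1), (f x)^2) = (f x)^2 := by
    rw [intervalIntegral.integral_const]; simp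
  have hmono : (∫ y in x..(x+1), (f x)^2) ≤ ∫ y in x..(x+1), ((f y)^2 + K) := by
    refine intervalIntegral.integral_mono_on (by linarith) (intervalIntegrable_const)
      (((hfc.pow 2).add continuous_const).intervalIntegrable x (x+1)) ?_
    intro y hy
    exact key y hy.1 hy.2
  have hsplit : (∫ y in x..(x+1), ((f y)^2 + K))
      = (∫ y in x..(x+1), (f y)^2) + K := by
    rw [intervalIntegral.integral_add (f := fun y => (f y)^2) ((hfc.pow 2).intervalIntegrable x (x+1))
      (intervalIntegrable_const), intervalIntegral.integral_const]
    simp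
  have hfin : (∫ y in x..(x+1), (f y)^2) ≤ ∫ t : ℝ, (f t)^2 := by
    rw [intervalIntegral.integral_of_le (by linarith)]
    exact setIntegral_le_integral hf2 (Filter.Eventually.of_forall fun t => sq_nonneg _)
  have : (f x)^2 ≤ (∫ t : ℝ, (f t)^2) + K := by
    rw [← hconst]
    exact hmono.trans (by rw [hsplit]; linarith)
  rw [hK] at this
  linarith

lemma secondDeriv_cubic (ε : ℝ) (a a1 a2 r r1 r2 : ℝ → ℝ)
    (ha : ∀ y, HasDerivAt a (a1 y) y) (ha1 : ∀ y, HasDerivAt a1 (a2 y) y)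
    (hr : ∀ y, HasDerivAt r (r1 y) y) (hr1 : ∀ y, HasDerivAt r1 (r2 y) y) (ξ : ℝ) :
    iteratedDeriv 2 (fun y => 3*(a y)^2*(r y) + 3*ε*(a y)*(r y)^2 + ε^2*(r y)^3) ξ
      = 6*(a1 ξ)^2*(r ξ) + 6*(a ξ)*(a2 ξ)*(r ξ) + 12*(a ξ)*(a1 ξ)*(r1 ξ)
        + 3*(a ξ)^2*(r2 ξ)
        + ε*(3*(a2 ξ)*(r ξ)^2) + ε*(12*(a1 ξ)*(r ξ)*(r1 ξ))
        + ε*(6*(a ξ)*(r1 ξ)^2) + ε*(6*(a ξ)*(r ξ)*(r2 ξ))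
        + ε^2*(6*(r ξ)*(r1 ξ)^2) + ε^2*(3*(r ξ)^2*(r2 ξ)) := by
  set N1 : ℝ → ℝ := fun y =>
    6*(a y)*(a1 y)*(r y) + 3*(a y)^2*(r1 y)
      + ε*(3*(a1 y)*(r y)^2) + ε*(6*(a y)*(r y)*(r1 y)) + ε^2*(3*(r y)^2*(r1 y)) with hN1def
  have hN1 : ∀ y, HasDerivAt
      (fun y => 3*(a y)^2*(r y) + 3*ε*(a y)*(r y)^2 + ε^2*(r y)^3) (N1 y) y := by
    intro y
    have h1 : HasDerivAt (fun y => 3*(a y)^2*(r y))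
        ((3*(((2:ℕ):ℝ)*(a y)^1*(a1 y)))*(r y) + 3*(a y)^2*(r1 y)) y :=
      (((ha y).pow 2).const_mul 3).mul (hr y)
    have h2 : HasDerivAt (fun y => 3*ε*((a y)*(r y)^2))
        ((3*ε)*((a1 y)*(r y)^2 + (a y)*(((2:ℕ):ℝ)*(r y)^1*(r1 y)))) y :=
      (((ha y).mul ((hr y).pow 2))).const_mul (3*ε)
    have h3 : HasDerivAt (fun y => ε^2*(r y)^3)
        (ε^2*(((3:ℕ):ℝ)*(r y)^2*(r1 y))) y := ((hr y).pow 3).const_mul (ε^2)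
    have h := (h1.add h2).add h3
    have heq : (fun y => 3*(a y)^2*(r y) + 3*ε*((a y)*(r y)^2) + ε^2*(r y)^3)
        = (fun y => 3*(a y)^2*(r y) + 3*ε*(a y)*(r y)^2 + ε^2*(r y)^3) := by
      funext y; ring
    rw [← heq]
    exact h.congr_deriv (by push_cast; simp only [hN1def]; ring)
  have hN2 : HasDerivAt N1
      (6*(a1 ξ)^2*(r ξ) + 6*(a ξ)*(a2 ξ)*(r ξ) + 12*(a ξ)*(a1 ξ)*(r1 ξ)
        + 3*(a ξ)^2*(r2 ξ)
        + ε*(3*(a2 ξ)*(r ξ)^2) + ε*(12*(a1 ξ)*(r ξ)*(r1 ξ))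
        + ε*(6*(a ξ)*(r1 ξ)^2) + ε*(6*(a ξ)*(r ξ)*(r2 ξ))
        + ε^2*(6*(r ξ)*(r1 ξ)^2) + ε^2*(3*(r ξ)^2*(r2 ξ))) ξ := by
    have h1 : HasDerivAt (fun y => 6*((a y)*(a1 y)*(r y)))
        (6*(((a1 ξ)*(a1 ξ) + (a ξ)*(a2 ξ))*(r ξ) + (a ξ)*(a1 ξ)*(r1 ξ))) ξ :=
      ((((ha ξ).mul (ha1 ξ)).mul (hr ξ))).const_mul 6
    have h2 : HasDerivAt (fun y => 3*(a y)^2*(r1 y))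
        ((3*(((2:ℕ):ℝ)*(a ξ)^1*(a1 ξ)))*(r1 ξ) + 3*(a ξ)^2*(r2 ξ)) ξ :=
      (((ha ξ).pow 2).const_mul 3).mul (hr1 ξ)
    have h3 : HasDerivAt (fun y => ε*(3*((a1 y)*(r y)^2)))
        (ε*(3*((a2 ξ)*(r ξ)^2 + (a1 ξ)*(((2:ℕ):ℝ)*(r ξ)^1*(r1 ξ))))) ξ :=
      ((((ha1 ξ).mul ((hr ξ).pow 2))).const_mul 3).const_mul ε
    have h4 : HasDerivAt (fun y => ε*(6*((a y)*(r y)*(r1 y))))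
        (ε*(6*(((a1 ξ)*(r ξ) + (a ξ)*(r1 ξ))*(r1 ξ) + (a ξ)*(r ξ)*(r2 ξ)))) ξ :=
      (((((ha ξ).mul (hr ξ)).mul (hr1 ξ))).const_mul 6).const_mul ε
    have h5 : HasDerivAt (fun y => ε^2*(3*((r y)^2*(r1 y))))
        (ε^2*(3*((((2:ℕ):ℝ)*(r ξ)^1*(r1 ξ))*(r1 ξ) + (r ξ)^2*(r2 ξ)))) ξ :=
      ((((hr ξ).pow 2).mul (hr1 ξ)).const_mul 3).const_mul (ε^2)
    have h := (((h1.add h2).add h3).add h4).add h5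
    have heq : (fun y => 6*((a y)*(a1 y)*(r y)) + 3*(a y)^2*(r1 y)
        + ε*(3*((a1 y)*(r y)^2)) + ε*(6*((a y)*(r y)*(r1 y))) + ε^2*(3*((r y)^2*(r1 y)))) = N1 := by
      funext y; simp only [hN1def]; ring
    rw [← heq]
    exact h.congr_deriv (by push_cast; ring)
  rw [iteratedDeriv_succ, iteratedDeriv_one]
  have hd : deriv (fun y => 3*(a y)^2*(r y) + 3*ε*(a y)*(r y)^2 + ε^2*(r y)^3) = N1 :=
    funext fun y => (hN1 y).deriv
  rw [hd]
  exact hN2.deriv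


lemma sum13_le (i1 i2 i3 i4 i5 i6 i7 i8 i9 i10 i11 i12 i13 K L : ℝ)
    (h1 : i1 ≤ K) (h2 : i2 ≤ K) (h3 : i3 ≤ K) (h4 : i4 ≤ K) (h5 : i5 ≤ K)
    (h6 : i6 ≤ K) (h7 : i7 ≤ K) (h8 : i8 ≤ K) (h9 : i9 ≤ K) (h10 : i10 ≤ K)
    (h11 : i11 ≤ K) (h12 : i12 ≤ K) (h13 : i13 ≤ K) (hKL : 260*K ≤ L) :
    20*(i1+i2+i3+i4+i5+i6+i7+i8+i9+i10+i11+i12+i13) ≤ L := by linarith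

set_option maxHeartbeats 4000000 in
/-- A priori bound on `‖R_{ξτ}‖_{L²}`: if `A` is bounded by `δ` (in `L^∞` for
`A, A_τ` and in `L²` for `A_ξ, A_{ξξ}, A_{ττ}`) on `[0,T]` and `R` with finite
energy `E` solves `R_{ξτ} = R + ε²R_{ττ} + (3A²R + 3εAR² + ε²R³)_{ξξ} + εA_{ττ}`,
then for some `(ε,δ)`-independent constant `C > 0` and all sufficiently small
`ε > 0`, `‖R_{ξτ}‖_{L²} ≤ C(δε + E^{1/2} + δ²E^{1/2} + δεE + ε²E^{3/2})`. -/
theorem error_Rxitau_L2_bound :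
    ∃ C : ℝ, 0 < C ∧ ∃ ε₀ : ℝ, 0 < ε₀ ∧
      ∀ (ε δ T : ℝ) (A R : ℝ → ℝ → ℝ),
        0 < ε → ε < ε₀ → 0 < δ → δ < 1 → 0 < T →
        ContDiff ℝ (⊤ : ℕ∞) (Function.uncurry A) →
        ContDiff ℝ (⊤ : ℕ∞) (Function.uncurry R) →
        (∀ τ ∈ Icc (0:ℝ) T, ∀ ξ : ℝ, |A τ ξ| ≤ δ) →
        (∀ τ ∈ Icc (0:ℝ) T, ∀ ξ : ℝ, |deriv (fun r : ℝ => A r ξ) τ| ≤ δ) →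
        (∀ τ ∈ Icc (0:ℝ) T,
          Integrable (fun ξ : ℝ => (deriv (fun y : ℝ => A τ y) ξ) ^ 2)
              (volume : Measure ℝ) ∧
            (∫ ξ : ℝ, (deriv (fun y : ℝ => A τ y) ξ) ^ 2) ≤ δ ^ 2) →
        (∀ τ ∈ Icc (0:ℝ) T,
          Integrable (fun ξ : ℝ => (iteratedDeriv 2 (fun y : ℝ => A τ y) ξ) ^ 2)
              (volume : Measure ℝ) ∧
            (∫ ξ : ℝ, (iteratedDeriv 2 (fun y : ℝ => A τ y) ξ) ^ 2) ≤ δ ^ 2) →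
        (∀ τ ∈ Icc (0:ℝ) T,
          Integrable (fun ξ : ℝ => (iteratedDeriv 2 (fun r : ℝ => A r ξ) τ) ^ 2)
              (volume : Measure ℝ) ∧
            (∫ ξ : ℝ, (iteratedDeriv 2 (fun r : ℝ => A r ξ) τ) ^ 2) ≤ δ ^ 2) →
        (∀ τ ∈ Icc (0:ℝ) T, Integrable (fun ξ : ℝ =>
          (R τ ξ) ^ 2 + (deriv (fun y : ℝ => R τ y) ξ) ^ 2
            + (iteratedDeriv 2 (fun y : ℝ => R τ y) ξ) ^ 2
            + 2 * ε ^ 2 * (deriv (fun r : ℝ => R r ξ) τ) ^ 2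
            + ε ^ 4 * (iteratedDeriv 2 (fun r : ℝ => R r ξ) τ) ^ 2)
          (volume : Measure ℝ)) →
        (∀ τ ∈ Icc (0:ℝ) T, Integrable (fun ξ : ℝ =>
          (deriv (fun y : ℝ => deriv (fun r : ℝ => R r y) τ) ξ) ^ 2)
          (volume : Measure ℝ)) →
        (∀ τ ξ : ℝ,
          deriv (fun y : ℝ => deriv (fun r : ℝ => R r y) τ) ξ
            = R τ ξ + ε ^ 2 * iteratedDeriv 2 (fun r : ℝ => R r ξ) τ
              + iteratedDeriv 2 (fun y : ℝ =>
                  3 * (A τ y) ^ 2 * R τ y + 3 * ε * A τ y * (R τ y) ^ 2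
                    + ε ^ 2 * (R τ y) ^ 3) ξ
              + ε * iteratedDeriv 2 (fun r : ℝ => A r ξ) τ) →
        ∀ τ ∈ Icc (0:ℝ) T,
          Real.sqrt (∫ ξ : ℝ,
              (deriv (fun y : ℝ => deriv (fun r : ℝ => R r y) τ) ξ) ^ 2)
            ≤ C * (δ * ε + Real.sqrt (errEnergy ε R τ)
                + δ ^ 2 * Real.sqrt (errEnergy ε R τ)
                + δ * ε * errEnergy ε R τ
                + ε ^ 2 * (errEnergy ε R τ * Real.sqrt (errEnergy ε R τ))) := by
  refine ⟨1000, by norm_num, 1, by norm_num, ?_⟩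
  intro ε δ T A R hε hεε₀ hδ hδ1 hT hA hR hAbd hAtbd hAx hAxx hAtt hEint hLint heq τ hτ
  -- energy abbreviations
  have hE0 : 0 ≤ errEnergy ε R τ := by
    unfold errEnergy
    apply integral_nonneg
    intro ξ
    positivity
  set E := errEnergy ε R τ with hEdef
  clear_value E
  set sE := Real.sqrt E with hsEdef
  clear_value sE
  have hsE0 : 0 ≤ sE := by rw [hsEdef]; exact Real.sqrt_nonneg E
  have hsEsq : sE^2 = E := by rw [hsEdef]; exact Real.sq_sqrt hE0
  -- the energy integrand, rewritten in terms of pt/px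
  have hEfun : (fun ξ : ℝ =>
      (R τ ξ) ^ 2 + (deriv (fun y : ℝ => R τ y) ξ) ^ 2
        + (iteratedDeriv 2 (fun y : ℝ => R τ y) ξ) ^ 2
        + 2 * ε ^ 2 * (deriv (fun r : ℝ => R r ξ) τ) ^ 2
        + ε ^ 4 * (iteratedDeriv 2 (fun r : ℝ => R r ξ) τ) ^ 2)
      = (fun ξ : ℝ => (R τ ξ)^2 + (px R τ ξ)^2 + (px (px R) τ ξ)^2
          + 2*ε^2*(pt R τ ξ)^2 + ε^4*(pt (pt R) τ ξ)^2) := by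
    funext ξ
    rw [deriv_slice_x hR, iteratedDeriv2_x hR, deriv_slice_t hR, iteratedDeriv2_t hR]
  have hEint' : Integrable (fun ξ : ℝ => (R τ ξ)^2 + (px R τ ξ)^2 + (px (px R) τ ξ)^2
      + 2*ε^2*(pt R τ ξ)^2 + ε^4*(pt (pt R) τ ξ)^2) (volume : Measure ℝ) := by
    rw [← hEfun]; exact hEint τ hτ
  have hEeq : E = ∫ ξ : ℝ, ((R τ ξ)^2 + (px R τ ξ)^2 + (px (px R) τ ξ)^2
      + 2*ε^2*(pt R τ ξ)^2 + ε^4*(pt (pt R) τ ξ)^2) := by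
    rw [hEdef]; unfold errEnergy; rw [hEfun]
  -- continuity
  have hcr : Continuous (fun ξ => R τ ξ) := cont_slice hR τ
  have hcr1 : Continuous (fun ξ => px R τ ξ) := cont_slice (contDiff_px hR) τ
  have hcr2 : Continuous (fun ξ => px (px R) τ ξ) := cont_slice (contDiff_px (contDiff_px hR)) τ
  have hcrtt : Continuous (fun ξ => pt (pt R) τ ξ) := cont_slice (contDiff_pt (contDiff_pt hR)) τ
  have hca : Continuous (fun ξ => A τ ξ) := cont_slice hA τ
  have hca1 : Continuous (fun ξ => px A τ ξ) := cont_slice (contDiff_px hA) τ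
  have hca2 : Continuous (fun ξ => px (px A) τ ξ) := cont_slice (contDiff_px (contDiff_px hA)) τ
  have hcatt : Continuous (fun ξ => pt (pt A) τ ξ) := cont_slice (contDiff_pt (contDiff_pt hA)) τ
  -- pointwise nonnegativity helper
  have hptw : ∀ ξ : ℝ, 0 ≤ (R τ ξ)^2 ∧ 0 ≤ (px R τ ξ)^2 ∧ 0 ≤ (px (px R) τ ξ)^2
      ∧ 0 ≤ 2*ε^2*(pt R τ ξ)^2 ∧ 0 ≤ ε^4*(pt (pt R) τ ξ)^2 := by
    intro ξ
    refine ⟨sq_nonneg _, sq_nonneg _, sq_nonneg _, by positivity, by positivity⟩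
  -- integrability of energy components
  have hIq1 : Integrable (fun x : ℝ => (R τ x)^2) (volume : Measure ℝ) := by
    refine hEint'.mono' (hcr.pow 2).aestronglyMeasurable (Filter.Eventually.of_forall fun ξ => ?_)
    have h := hptw ξ
    rw [Real.norm_eq_abs, abs_of_nonneg (sq_nonneg _)]
    linarith only [h.1, h.2.1, h.2.2.1, h.2.2.2.1, h.2.2.2.2]
  have hIr12 : Integrable (fun x : ℝ => (px R τ x)^2) (volume : Measure ℝ) := by
    refine hEint'.mono' (hcr1.pow 2).aestronglyMeasurable (Filter.Eventually.of_forall fun ξ => ?_)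
    have h := hptw ξ
    rw [Real.norm_eq_abs, abs_of_nonneg (sq_nonneg _)]
    linarith only [h.1, h.2.1, h.2.2.1, h.2.2.2.1, h.2.2.2.2]
  have hIr22 : Integrable (fun x : ℝ => (px (px R) τ x)^2) (volume : Measure ℝ) := by
    refine hEint'.mono' (hcr2.pow 2).aestronglyMeasurable (Filter.Eventually.of_forall fun ξ => ?_)
    have h := hptw ξ
    rw [Real.norm_eq_abs, abs_of_nonneg (sq_nonneg _)]
    linarith only [h.1, h.2.1, h.2.2.1, h.2.2.2.1, h.2.2.2.2]
  have hIq2 : Integrable (fun x : ℝ => (ε^2*(pt (pt R) τ x))^2) (volume : Measure ℝ) := by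
    refine hEint'.mono' (((continuous_const.mul hcrtt).pow 2)).aestronglyMeasurable
      (Filter.Eventually.of_forall fun ξ => ?_)
    have h := hptw ξ
    have e : (ε^2*(pt (pt R) τ ξ))^2 = ε^4*(pt (pt R) τ ξ)^2 := by ring
    rw [Real.norm_eq_abs, abs_of_nonneg (sq_nonneg _), e]
    linarith only [h.1, h.2.1, h.2.2.1, h.2.2.2.1, h.2.2.2.2]
  -- integral bounds against E
  have hJr : (∫ x : ℝ, (R τ x)^2) ≤ E := by
    rw [hEeq]
    refine integral_mono hIq1 hEint' fun ξ => ?_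
    have h := hptw ξ
    show (R τ ξ)^2 ≤ _
    linarith only [h.2.1, h.2.2.1, h.2.2.2.1, h.2.2.2.2]
  have hJr1 : (∫ x : ℝ, (px R τ x)^2) ≤ E := by
    rw [hEeq]
    refine integral_mono hIr12 hEint' fun ξ => ?_
    have h := hptw ξ
    show (px R τ ξ)^2 ≤ _
    linarith only [h.1, h.2.2.1, h.2.2.2.1, h.2.2.2.2]
  have hJr2 : (∫ x : ℝ, (px (px R) τ x)^2) ≤ E := by
    rw [hEeq]
    refine integral_mono hIr22 hEint' fun ξ => ?_
    have h := hptw ξ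
    show (px (px R) τ ξ)^2 ≤ _
    linarith only [h.1, h.2.1, h.2.2.2.1, h.2.2.2.2]
  have hJq2 : (∫ x : ℝ, (ε^2*(pt (pt R) τ x))^2) ≤ E := by
    rw [hEeq]
    refine integral_mono hIq2 hEint' fun ξ => ?_
    have h := hptw ξ
    show (ε^2*(pt (pt R) τ ξ))^2 ≤ _
    have e : (ε^2*(pt (pt R) τ ξ))^2 = ε^4*(pt (pt R) τ ξ)^2 := by ring
    rw [e]
    linarith only [h.1, h.2.1, h.2.2.1, h.2.2.2.1]
  -- A-side integrability and bounds
  have eAx : (fun ξ : ℝ => (deriv (fun y : ℝ => A τ y) ξ) ^ 2)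
      = (fun ξ : ℝ => (px A τ ξ)^2) := by
    funext ξ; rw [deriv_slice_x hA]
  have hIa1 : Integrable (fun x : ℝ => (px A τ x)^2) (volume : Measure ℝ) := by
    rw [← eAx]; exact (hAx τ hτ).1
  have hJa1 : (∫ x : ℝ, (px A τ x)^2) ≤ δ^2 := by
    rw [← eAx]; exact (hAx τ hτ).2
  have eAxx : (fun ξ : ℝ => (iteratedDeriv 2 (fun y : ℝ => A τ y) ξ) ^ 2)
      = (fun ξ : ℝ => (px (px A) τ ξ)^2) := by
    funext ξ; rw [iteratedDeriv2_x hA]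
  have hIa2 : Integrable (fun x : ℝ => (px (px A) τ x)^2) (volume : Measure ℝ) := by
    rw [← eAxx]; exact (hAxx τ hτ).1
  have hJa2 : (∫ x : ℝ, (px (px A) τ x)^2) ≤ δ^2 := by
    rw [← eAxx]; exact (hAxx τ hτ).2
  have eAtt : (fun ξ : ℝ => (iteratedDeriv 2 (fun r : ℝ => A r ξ) τ) ^ 2)
      = (fun ξ : ℝ => (pt (pt A) τ ξ)^2) := by
    funext ξ; rw [iteratedDeriv2_t hA]
  have hIatt : Integrable (fun x : ℝ => (pt (pt A) τ x)^2) (volume : Measure ℝ) := by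
    rw [← eAtt]; exact (hAtt τ hτ).1
  have hJatt : (∫ x : ℝ, (pt (pt A) τ x)^2) ≤ δ^2 := by
    rw [← eAtt]; exact (hAtt τ hτ).2
  -- L∞ bounds via Sobolev
  have hr_inf : ∀ x : ℝ, |R τ x| ≤ 2*sE := by
    intro x
    have hs := sobolev_bound (fun ξ => R τ ξ) (fun ξ => px R τ ξ)
      (fun x => hasDerivAt_px hR τ x) hcr hcr1 hIq1 hIr12 x
    have h4 : (R τ x)^2 ≤ (2*sE)^2 := by
      have h5 : (R τ x)^2 ≤ 3*E := by linarith only [hs, hJr, hJr1]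
      nlinarith only [h5, hE0, hsEsq]
    calc |R τ x| = Real.sqrt ((R τ x)^2) := (Real.sqrt_sq_eq_abs _).symm
      _ ≤ Real.sqrt ((2*sE)^2) := Real.sqrt_le_sqrt h4
      _ = 2*sE := Real.sqrt_sq (by linarith only [hsE0])
  have hr1_inf : ∀ x : ℝ, |px R τ x| ≤ 2*sE := by
    intro x
    have hs := sobolev_bound (fun ξ => px R τ ξ) (fun ξ => px (px R) τ ξ)
      (fun x => hasDerivAt_px (contDiff_px hR) τ x) hcr1 hcr2 hIr12 hIr22 x
    have h4 : (px R τ x)^2 ≤ (2*sE)^2 := by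
      have h5 : (px R τ x)^2 ≤ 3*E := by linarith only [hs, hJr1, hJr2]
      nlinarith only [h5, hE0, hsEsq]
    calc |px R τ x| = Real.sqrt ((px R τ x)^2) := (Real.sqrt_sq_eq_abs _).symm
      _ ≤ Real.sqrt ((2*sE)^2) := Real.sqrt_le_sqrt h4
      _ = 2*sE := Real.sqrt_sq (by linarith only [hsE0])
  have ha1_inf : ∀ x : ℝ, |px A τ x| ≤ 2*δ := by
    intro x
    have hs := sobolev_bound (fun ξ => px A τ ξ) (fun ξ => px (px A) τ ξ)
      (fun x => hasDerivAt_px (contDiff_px hA) τ x) hca1 hca2 hIa1 hIa2 x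
    have h4 : (px A τ x)^2 ≤ (2*δ)^2 := by
      have h5 : (px A τ x)^2 ≤ 3*δ^2 := by linarith only [hs, hJa1, hJa2]
      nlinarith only [h5, sq_nonneg δ]
    calc |px A τ x| = Real.sqrt ((px A τ x)^2) := (Real.sqrt_sq_eq_abs _).symm
      _ ≤ Real.sqrt ((2*δ)^2) := Real.sqrt_le_sqrt h4
      _ = 2*δ := Real.sqrt_sq (by linarith only [hδ])
  have ha_inf : ∀ x : ℝ, |A τ x| ≤ δ := hAbd τ hτ
  -- second-derivative identity for the cubic nonlinearity
  have hrD : ∀ y : ℝ, HasDerivAt (fun y => R τ y) (px R τ y) y := fun y => hasDerivAt_px hR τ y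
  have hrD1 : ∀ y : ℝ, HasDerivAt (fun y => px R τ y) (px (px R) τ y) y :=
    fun y => hasDerivAt_px (contDiff_px hR) τ y
  have haD : ∀ y : ℝ, HasDerivAt (fun y => A τ y) (px A τ y) y := fun y => hasDerivAt_px hA τ y
  have haD1 : ∀ y : ℝ, HasDerivAt (fun y => px A τ y) (px (px A) τ y) y :=
    fun y => hasDerivAt_px (contDiff_px hA) τ y
  have hcub : ∀ ξ : ℝ, iteratedDeriv 2 (fun y : ℝ =>
        3 * (A τ y) ^ 2 * R τ y + 3 * ε * A τ y * (R τ y) ^ 2 + ε ^ 2 * (R τ y) ^ 3) ξ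
      = 6*(px A τ ξ)^2*(R τ ξ) + 6*(A τ ξ)*(px (px A) τ ξ)*(R τ ξ)
        + 12*(A τ ξ)*(px A τ ξ)*(px R τ ξ) + 3*(A τ ξ)^2*(px (px R) τ ξ)
        + ε*(3*(px (px A) τ ξ)*(R τ ξ)^2) + ε*(12*(px A τ ξ)*(R τ ξ)*(px R τ ξ))
        + ε*(6*(A τ ξ)*(px R τ ξ)^2) + ε*(6*(A τ ξ)*(R τ ξ)*(px (px R) τ ξ))
        + ε^2*(6*(R τ ξ)*(px R τ ξ)^2) + ε^2*(3*(R τ ξ)^2*(px (px R) τ ξ)) :=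
    fun ξ => secondDeriv_cubic ε (fun y => A τ y) (fun y => px A τ y)
      (fun y => px (px A) τ y) (fun y => R τ y) (fun y => px R τ y)
      (fun y => px (px R) τ y) haD haD1 hrD hrD1 ξ
  have hcub2 : ∀ x : ℝ, iteratedDeriv 2 (fun y : ℝ =>
        3 * (A τ y) ^ 2 * R τ y + 3 * ε * A τ y * (R τ y) ^ 2 + ε ^ 2 * (R τ y) ^ 3) x
      = 6*(px A τ x)*(R τ x)*(px A τ x) + 6*(A τ x)*(R τ x)*(px (px A) τ x) + 12*(A τ x)*(px R τ x)*(px A τ x) + 3*(A τ x)*(A τ x)*(px (px R) τ x) + (3*ε)*(R τ x)*(R τ x)*(px (px A) τ x) + (12*ε)*(px A τ x)*(R τ x)*(px R τ x) + (6*ε)*(A τ x)*(px R τ x)*(px R τ x) + (6*ε)*(A τ x)*(R τ x)*(px (px R) τ x) + (6*ε^2)*(R τ x)*(px R τ x)*(px R τ x) + (3*ε^2)*(R τ x)*(R τ x)*(px (px R) τ x) := fun x => (hcub x).trans (by ring)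
  -- pointwise identity for the mixed derivative
  have hpt2 : ∀ x : ℝ, deriv (fun y : ℝ => deriv (fun r : ℝ => R r y) τ) x
      = (R τ x) + (ε^2*(pt (pt R) τ x)) + (6*(px A τ x)*(R τ x)*(px A τ x) + 6*(A τ x)*(R τ x)*(px (px A) τ x) + 12*(A τ x)*(px R τ x)*(px A τ x) + 3*(A τ x)*(A τ x)*(px (px R) τ x) + (3*ε)*(R τ x)*(R τ x)*(px (px A) τ x) + (12*ε)*(px A τ x)*(R τ x)*(px R τ x) + (6*ε)*(A τ x)*(px R τ x)*(px R τ x) + (6*ε)*(A τ x)*(R τ x)*(px (px R) τ x) + (6*ε^2)*(R τ x)*(px R τ x)*(px R τ x) + (3*ε^2)*(R τ x)*(R τ x)*(px (px R) τ x)) + (ε*(pt (pt A) τ x)) := by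
    intro x
    rw [heq τ x, iteratedDeriv2_t hR τ x, iteratedDeriv2_t hA τ x, hcub2 x]
  -- the constant M
  set M : ℝ := δ * ε + sE + δ ^ 2 * sE + δ * ε * E + ε ^ 2 * (E * sE) with hMdef
  clear_value M
  have m1 : 0 ≤ δ*ε := mul_nonneg hδ.le hε.le
  have m3 : 0 ≤ δ^2*sE := mul_nonneg (sq_nonneg δ) hsE0
  have m4 : 0 ≤ δ*ε*E := mul_nonneg m1 hE0
  have m5 : 0 ≤ ε^2*(E*sE) := mul_nonneg (sq_nonneg ε) (mul_nonneg hE0 hsE0)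
  have hM0 : 0 ≤ M := by rw [hMdef]; linarith only [m1, hsE0, m3, m4, m5]
  have hMa : δ*ε ≤ M := by rw [hMdef]; linarith only [m1, hsE0, m3, m4, m5]
  have hMb : sE ≤ M := by rw [hMdef]; linarith only [m1, hsE0, m3, m4, m5]
  have hMc : δ^2*sE ≤ M := by rw [hMdef]; linarith only [m1, hsE0, m3, m4, m5]
  have hMd : δ*ε*E ≤ M := by rw [hMdef]; linarith only [m1, hsE0, m3, m4, m5]
  have hMe : ε^2*(E*sE) ≤ M := by rw [hMdef]; linarith only [m1, hsE0, m3, m4, m5]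
  -- g-integral bounds in squared form
  have hJr1sE : (∫ x : ℝ, (px R τ x)^2) ≤ sE^2 := by rw [hsEsq]; exact hJr1
  have hJr2sE : (∫ x : ℝ, (px (px R) τ x)^2) ≤ sE^2 := by rw [hsEsq]; exact hJr2
  -- the ten nonlinear terms

  have habs1 : ∀ x : ℝ, |6*(px A τ x)*(R τ x)*(px A τ x)| ≤ (6*(2*δ)*(2*sE))*|(px A τ x)| := fun x =>
    abs_mul3_le 6 _ _ _ (2*δ) (2*sE) (by norm_num) (ha1_inf x) (hr_inf x)
  have hK1 : (0:ℝ) ≤ 6*(2*δ)*(2*sE) := by nlinarith only [mul_nonneg hδ.le hsE0]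
  have hIy1 : Integrable (fun x => (6*(px A τ x)*(R τ x)*(px A τ x))^2) (volume : Measure ℝ) :=
    sq_int_of_dom _ _ _ (((continuous_const.mul hca1).mul hcr).mul hca1).aestronglyMeasurable hIa1 habs1
  have hKb1 : (6*(2*δ)*(2*sE))*δ ≤ 48*M := by
    have e : (6*(2*δ)*(2*sE))*δ = 24*(δ^2*sE) := by ring
    rw [e]; linarith only [hMc, hM0]
  have hJy1 : (∫ x : ℝ, (6*(px A τ x)*(R τ x)*(px A τ x))^2) ≤ (48*M)^2 :=
    int_sq_bound _ _ _ δ (48*M) hK1 hδ.le hIa1 hJa1 habs1 hKb1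

  have habs2 : ∀ x : ℝ, |6*(A τ x)*(R τ x)*(px (px A) τ x)| ≤ (6*δ*(2*sE))*|(px (px A) τ x)| := fun x =>
    abs_mul3_le 6 _ _ _ δ (2*sE) (by norm_num) (ha_inf x) (hr_inf x)
  have hK2 : (0:ℝ) ≤ 6*δ*(2*sE) := by nlinarith only [mul_nonneg hδ.le hsE0]
  have hIy2 : Integrable (fun x => (6*(A τ x)*(R τ x)*(px (px A) τ x))^2) (volume : Measure ℝ) :=
    sq_int_of_dom _ _ _ (((continuous_const.mul hca).mul hcr).mul hca2).aestronglyMeasurable hIa2 habs2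
  have hKb2 : (6*δ*(2*sE))*δ ≤ 48*M := by
    have e : (6*δ*(2*sE))*δ = 12*(δ^2*sE) := by ring
    rw [e]; linarith only [hMc, hM0]
  have hJy2 : (∫ x : ℝ, (6*(A τ x)*(R τ x)*(px (px A) τ x))^2) ≤ (48*M)^2 :=
    int_sq_bound _ _ _ δ (48*M) hK2 hδ.le hIa2 hJa2 habs2 hKb2

  have habs3 : ∀ x : ℝ, |12*(A τ x)*(px R τ x)*(px A τ x)| ≤ (12*δ*(2*sE))*|(px A τ x)| := fun x =>
    abs_mul3_le 12 _ _ _ δ (2*sE) (by norm_num) (ha_inf x) (hr1_inf x)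
  have hK3 : (0:ℝ) ≤ 12*δ*(2*sE) := by nlinarith only [mul_nonneg hδ.le hsE0]
  have hIy3 : Integrable (fun x => (12*(A τ x)*(px R τ x)*(px A τ x))^2) (volume : Measure ℝ) :=
    sq_int_of_dom _ _ _ (((continuous_const.mul hca).mul hcr1).mul hca1).aestronglyMeasurable hIa1 habs3
  have hKb3 : (12*δ*(2*sE))*δ ≤ 48*M := by
    have e : (12*δ*(2*sE))*δ = 24*(δ^2*sE) := by ring
    rw [e]; linarith only [hMc, hM0]
  have hJy3 : (∫ x : ℝ, (12*(A τ x)*(px R τ x)*(px A τ x))^2) ≤ (48*M)^2 :=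
    int_sq_bound _ _ _ δ (48*M) hK3 hδ.le hIa1 hJa1 habs3 hKb3

  have habs4 : ∀ x : ℝ, |3*(A τ x)*(A τ x)*(px (px R) τ x)| ≤ (3*δ*δ)*|(px (px R) τ x)| := fun x =>
    abs_mul3_le 3 _ _ _ δ δ (by norm_num) (ha_inf x) (ha_inf x)
  have hK4 : (0:ℝ) ≤ 3*δ*δ := by nlinarith only [mul_nonneg hδ.le hδ.le]
  have hIy4 : Integrable (fun x => (3*(A τ x)*(A τ x)*(px (px R) τ x))^2) (volume : Measure ℝ) :=
    sq_int_of_dom _ _ _ (((continuous_const.mul hca).mul hca).mul hcr2).aestronglyMeasurable hIr22 habs4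
  have hKb4 : (3*δ*δ)*sE ≤ 48*M := by
    have e : (3*δ*δ)*sE = 3*(δ^2*sE) := by ring
    rw [e]; linarith only [hMc, hM0]
  have hJy4 : (∫ x : ℝ, (3*(A τ x)*(A τ x)*(px (px R) τ x))^2) ≤ (48*M)^2 :=
    int_sq_bound _ _ _ sE (48*M) hK4 hsE0 hIr22 hJr2sE habs4 hKb4

  have habs5 : ∀ x : ℝ, |(3*ε)*(R τ x)*(R τ x)*(px (px A) τ x)| ≤ ((3*ε)*(2*sE)*(2*sE))*|(px (px A) τ x)| := fun x =>
    abs_mul3_le (3*ε) _ _ _ (2*sE) (2*sE) (by linarith only [hε]) (hr_inf x) (hr_inf x)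
  have hK5 : (0:ℝ) ≤ (3*ε)*(2*sE)*(2*sE) := by nlinarith only [mul_nonneg hε.le (mul_nonneg hsE0 hsE0)]
  have hIy5 : Integrable (fun x => ((3*ε)*(R τ x)*(R τ x)*(px (px A) τ x))^2) (volume : Measure ℝ) :=
    sq_int_of_dom _ _ _ (((continuous_const.mul hcr).mul hcr).mul hca2).aestronglyMeasurable hIa2 habs5
  have hKb5 : ((3*ε)*(2*sE)*(2*sE))*δ ≤ 48*M := by
    have e : ((3*ε)*(2*sE)*(2*sE))*δ = 12*(δ*ε*sE^2) := by ring
    rw [hsEsq] at e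
    rw [e]; linarith only [hMd, hM0]
  have hJy5 : (∫ x : ℝ, ((3*ε)*(R τ x)*(R τ x)*(px (px A) τ x))^2) ≤ (48*M)^2 :=
    int_sq_bound _ _ _ δ (48*M) hK5 hδ.le hIa2 hJa2 habs5 hKb5

  have habs6 : ∀ x : ℝ, |(12*ε)*(px A τ x)*(R τ x)*(px R τ x)| ≤ ((12*ε)*(2*δ)*(2*sE))*|(px R τ x)| := fun x =>
    abs_mul3_le (12*ε) _ _ _ (2*δ) (2*sE) (by linarith only [hε]) (ha1_inf x) (hr_inf x)
  have hK6 : (0:ℝ) ≤ (12*ε)*(2*δ)*(2*sE) := by nlinarith only [mul_nonneg (mul_nonneg hε.le hδ.le) hsE0]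
  have hIy6 : Integrable (fun x => ((12*ε)*(px A τ x)*(R τ x)*(px R τ x))^2) (volume : Measure ℝ) :=
    sq_int_of_dom _ _ _ (((continuous_const.mul hca1).mul hcr).mul hcr1).aestronglyMeasurable hIr12 habs6
  have hKb6 : ((12*ε)*(2*δ)*(2*sE))*sE ≤ 48*M := by
    have e : ((12*ε)*(2*δ)*(2*sE))*sE = 48*(δ*ε*sE^2) := by ring
    rw [hsEsq] at e
    rw [e]; linarith only [hMd, hM0]
  have hJy6 : (∫ x : ℝ, ((12*ε)*(px A τ x)*(R τ x)*(px R τ x))^2) ≤ (48*M)^2 :=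
    int_sq_bound _ _ _ sE (48*M) hK6 hsE0 hIr12 hJr1sE habs6 hKb6

  have habs7 : ∀ x : ℝ, |(6*ε)*(A τ x)*(px R τ x)*(px R τ x)| ≤ ((6*ε)*δ*(2*sE))*|(px R τ x)| := fun x =>
    abs_mul3_le (6*ε) _ _ _ δ (2*sE) (by linarith only [hε]) (ha_inf x) (hr1_inf x)
  have hK7 : (0:ℝ) ≤ (6*ε)*δ*(2*sE) := by nlinarith only [mul_nonneg (mul_nonneg hε.le hδ.le) hsE0]
  have hIy7 : Integrable (fun x => ((6*ε)*(A τ x)*(px R τ x)*(px R τ x))^2) (volume : Measure ℝ) :=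
    sq_int_of_dom _ _ _ (((continuous_const.mul hca).mul hcr1).mul hcr1).aestronglyMeasurable hIr12 habs7
  have hKb7 : ((6*ε)*δ*(2*sE))*sE ≤ 48*M := by
    have e : ((6*ε)*δ*(2*sE))*sE = 12*(δ*ε*sE^2) := by ring
    rw [hsEsq] at e
    rw [e]; linarith only [hMd, hM0]
  have hJy7 : (∫ x : ℝ, ((6*ε)*(A τ x)*(px R τ x)*(px R τ x))^2) ≤ (48*M)^2 :=
    int_sq_bound _ _ _ sE (48*M) hK7 hsE0 hIr12 hJr1sE habs7 hKb7

  have habs8 : ∀ x : ℝ, |(6*ε)*(A τ x)*(R τ x)*(px (px R) τ x)| ≤ ((6*ε)*δ*(2*sE))*|(px (px R) τ x)| := fun x =>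
    abs_mul3_le (6*ε) _ _ _ δ (2*sE) (by linarith only [hε]) (ha_inf x) (hr_inf x)
  have hK8 : (0:ℝ) ≤ (6*ε)*δ*(2*sE) := by nlinarith only [mul_nonneg (mul_nonneg hε.le hδ.le) hsE0]
  have hIy8 : Integrable (fun x => ((6*ε)*(A τ x)*(R τ x)*(px (px R) τ x))^2) (volume : Measure ℝ) :=
    sq_int_of_dom _ _ _ (((continuous_const.mul hca).mul hcr).mul hcr2).aestronglyMeasurable hIr22 habs8
  have hKb8 : ((6*ε)*δ*(2*sE))*sE ≤ 48*M := by
    have e : ((6*ε)*δ*(2*sE))*sE = 12*(δ*ε*sE^2) := by ring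
    rw [hsEsq] at e
    rw [e]; linarith only [hMd, hM0]
  have hJy8 : (∫ x : ℝ, ((6*ε)*(A τ x)*(R τ x)*(px (px R) τ x))^2) ≤ (48*M)^2 :=
    int_sq_bound _ _ _ sE (48*M) hK8 hsE0 hIr22 hJr2sE habs8 hKb8

  have habs9 : ∀ x : ℝ, |(6*ε^2)*(R τ x)*(px R τ x)*(px R τ x)| ≤ ((6*ε^2)*(2*sE)*(2*sE))*|(px R τ x)| := fun x =>
    abs_mul3_le (6*ε^2) _ _ _ (2*sE) (2*sE) (by positivity) (hr_inf x) (hr1_inf x)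
  have hK9 : (0:ℝ) ≤ (6*ε^2)*(2*sE)*(2*sE) := by nlinarith only [mul_nonneg (sq_nonneg ε) (mul_nonneg hsE0 hsE0)]
  have hIy9 : Integrable (fun x => ((6*ε^2)*(R τ x)*(px R τ x)*(px R τ x))^2) (volume : Measure ℝ) :=
    sq_int_of_dom _ _ _ (((continuous_const.mul hcr).mul hcr1).mul hcr1).aestronglyMeasurable hIr12 habs9
  have hKb9 : ((6*ε^2)*(2*sE)*(2*sE))*sE ≤ 48*M := by
    have e : ((6*ε^2)*(2*sE)*(2*sE))*sE = 24*(ε^2*(sE^2*sE)) := by ring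
    rw [hsEsq] at e
    rw [e]; linarith only [hMe, hM0]
  have hJy9 : (∫ x : ℝ, ((6*ε^2)*(R τ x)*(px R τ x)*(px R τ x))^2) ≤ (48*M)^2 :=
    int_sq_bound _ _ _ sE (48*M) hK9 hsE0 hIr12 hJr1sE habs9 hKb9

  have habs10 : ∀ x : ℝ, |(3*ε^2)*(R τ x)*(R τ x)*(px (px R) τ x)| ≤ ((3*ε^2)*(2*sE)*(2*sE))*|(px (px R) τ x)| := fun x =>
    abs_mul3_le (3*ε^2) _ _ _ (2*sE) (2*sE) (by positivity) (hr_inf x) (hr_inf x)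
  have hK10 : (0:ℝ) ≤ (3*ε^2)*(2*sE)*(2*sE) := by nlinarith only [mul_nonneg (sq_nonneg ε) (mul_nonneg hsE0 hsE0)]
  have hIy10 : Integrable (fun x => ((3*ε^2)*(R τ x)*(R τ x)*(px (px R) τ x))^2) (volume : Measure ℝ) :=
    sq_int_of_dom _ _ _ (((continuous_const.mul hcr).mul hcr).mul hcr2).aestronglyMeasurable hIr22 habs10
  have hKb10 : ((3*ε^2)*(2*sE)*(2*sE))*sE ≤ 48*M := by
    have e : ((3*ε^2)*(2*sE)*(2*sE))*sE = 12*(ε^2*(sE^2*sE)) := by ring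
    rw [hsEsq] at e
    rw [e]; linarith only [hMe, hM0]
  have hJy10 : (∫ x : ℝ, ((3*ε^2)*(R τ x)*(R τ x)*(px (px R) τ x))^2) ≤ (48*M)^2 :=
    int_sq_bound _ _ _ sE (48*M) hK10 hsE0 hIr22 hJr2sE habs10 hKb10

  -- the three linear terms
  have hJq1 : (∫ x : ℝ, (R τ x)^2) ≤ (48*M)^2 :=
    calc (∫ x : ℝ, (R τ x)^2) ≤ E := hJr
      _ = sE^2 := hsEsq.symm
      _ ≤ (48*M)^2 := by nlinarith only [hsE0, hMb, hM0]
  have hJq2' : (∫ x : ℝ, (ε^2*(pt (pt R) τ x))^2) ≤ (48*M)^2 :=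
    calc (∫ x : ℝ, (ε^2*(pt (pt R) τ x))^2) ≤ E := hJq2
      _ = sE^2 := hsEsq.symm
      _ ≤ (48*M)^2 := by nlinarith only [hsE0, hMb, hM0]
  have hIq3 : Integrable (fun x : ℝ => (ε*(pt (pt A) τ x))^2) (volume : Measure ℝ) := by
    have e : (fun x : ℝ => (ε*(pt (pt A) τ x))^2) = (fun x : ℝ => ε^2*(pt (pt A) τ x)^2) := by
      funext x; ring
    rw [e]; exact hIatt.const_mul (ε^2)
  have hJq3 : (∫ x : ℝ, (ε*(pt (pt A) τ x))^2) ≤ (48*M)^2 := by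
    have e : (fun x : ℝ => (ε*(pt (pt A) τ x))^2) = (fun x : ℝ => ε^2*(pt (pt A) τ x)^2) := by
      funext x; ring
    rw [e, integral_const_mul]
    calc ε^2 * (∫ x : ℝ, (pt (pt A) τ x)^2) ≤ ε^2 * δ^2 :=
          mul_le_mul_of_nonneg_left hJatt (sq_nonneg ε)
      _ ≤ (48*M)^2 := by nlinarith only [m1, hMa, hM0]
  -- assembling: the pointwise quadratic bound
  have hG : ∀ x : ℝ, (deriv (fun y : ℝ => deriv (fun r : ℝ => R r y) τ) x)^2
      ≤ 20*((R τ x)^2 + (ε^2*(pt (pt R) τ x))^2 + (ε*(pt (pt A) τ x))^2 + (6*(px A τ x)*(R τ x)*(px A τ x))^2 + (6*(A τ x)*(R τ x)*(px (px A) τ x))^2 + (12*(A τ x)*(px R τ x)*(px A τ x))^2 + (3*(A τ x)*(A τ x)*(px (px R) τ x))^2 + ((3*ε)*(R τ x)*(R τ x)*(px (px A) τ x))^2 + ((12*ε)*(px A τ x)*(R τ x)*(px R τ x))^2 + ((6*ε)*(A τ x)*(px R τ x)*(px R τ x))^2 + ((6*ε)*(A τ x)*(R τ x)*(px (px R) τ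 x))^2 + ((6*ε^2)*(R τ x)*(px R τ x)*(px R τ x))^2 + ((3*ε^2)*(R τ x)*(R τ x)*(px (px R) τ x))^2) := by
    intro x
    rw [hpt2 x]
    exact sq_sum13 _ _ _ _ _ _ _ _ _ _ _ _ _
  have p1 : Integrable (fun x : ℝ => (R τ x)^2 + (ε^2*(pt (pt R) τ x))^2) (volume : Measure ℝ) := hIq1.add hIq2
  have p2 : Integrable (fun x : ℝ => (R τ x)^2 + (ε^2*(pt (pt R) τ x))^2 + (ε*(pt (pt A) τ x))^2) (volume : Measure ℝ) := p1.add hIq3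
  have p3 : Integrable (fun x : ℝ => (R τ x)^2 + (ε^2*(pt (pt R) τ x))^2 + (ε*(pt (pt A) τ x))^2 + (6*(px A τ x)*(R τ x)*(px A τ x))^2) (volume : Measure ℝ) := p2.add hIy1
  have p4 : Integrable (fun x : ℝ => (R τ x)^2 + (ε^2*(pt (pt R) τ x))^2 + (ε*(pt (pt A) τ x))^2 + (6*(px A τ x)*(R τ x)*(px A τ x))^2 + (6*(A τ x)*(R τ x)*(px (px A) τ x))^2) (volume : Measure ℝ) := p3.add hIy2
  have p5 : Integrable (fun x : ℝ => (R τ x)^2 + (ε^2*(pt (pt R) τ x))^2 + (ε*(pt (pt A) τ x))^2 + (6*(px A τ x)*(R τ x)*(px A τ x))^2 + (6*(A τ x)*(R τ x)*(px (px A) τ x))^2 + (12*(A τ x)*(px R τ x)*(px A τ x))^2) (volume : Measure ℝ) := p4.add hIy3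
  have p6 : Integrable (fun x : ℝ => (R τ x)^2 + (ε^2*(pt (pt R) τ x))^2 + (ε*(pt (pt A) τ x))^2 + (6*(px A τ x)*(R τ x)*(px A τ x))^2 + (6*(A τ x)*(R τ x)*(px (px A) τ x))^2 + (12*(A τ x)*(px R τ x)*(px A τ x))^2 + (3*(A τ x)*(A τ x)*(px (px R) τ x))^2) (volume : Measure ℝ) := p5.add hIy4
  have p7 : Integrable (fun x : ℝ => (R τ x)^2 + (ε^2*(pt (pt R) τ x))^2 + (ε*(pt (pt A) τ x))^2 + (6*(px A τ x)*(R τ x)*(px A τ x))^2 + (6*(A τ x)*(R τ x)*(px (px A) τ x))^2 + (12*(A τ x)*(px R τ x)*(px A τ x))^2 + (3*(A τ x)*(A τ x)*(px (px R) τ x))^2 + ((3*ε)*(R τ x)*(R τ x)*(px (px A) τ x))^2) (volume : Measure ℝ) := p6.add hIy5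
  have p8 : Integrable (fun x : ℝ => (R τ x)^2 + (ε^2*(pt (pt R) τ x))^2 + (ε*(pt (pt A) τ x))^2 + (6*(px A τ x)*(R τ x)*(px A τ x))^2 + (6*(A τ x)*(R τ x)*(px (px A) τ x))^2 + (12*(A τ x)*(px R τ x)*(px A τ x))^2 + (3*(A τ x)*(A τ x)*(px (px R) τ x))^2 + ((3*ε)*(R τ x)*(R τ x)*(px (px A) τ x))^2 + ((12*ε)*(px A τ x)*(R τ x)*(px R τ x))^2) (volume : Measure ℝ) := p7.add hIy6
  have p9 : Integrable (fun x : ℝ => (R τ x)^2 + (ε^2*(pt (pt R) τ x))^2 + (ε*(pt (pt A) τ x))^2 + (6*(px A τ x)*(R τ x)*(px A τ x))^2 + (6*(A τ x)*(R τ x)*(px (px A) τ x))^2 + (12*(A τ x)*(px R τ x)*(px A τ x))^2 + (3*(A τ x)*(A τ x)*(px (px R) τ x))^2 + ((3*ε)*(R τ x)*(R τ x)*(px (px A) τ x))^2 + ((12*ε)*(px A τ x)*(R τ x)*(px R τ x))^2 + ((6*ε)*(A τ x)*(px R τ x)*(px R τ x))^2) (volume : Measure ℝ) := p8.add hIy7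
  have p10 : Integrable (fun x : ℝ => (R τ x)^2 + (ε^2*(pt (pt R) τ x))^2 + (ε*(pt (pt A) τ x))^2 + (6*(px A τ x)*(R τ x)*(px A τ x))^2 + (6*(A τ x)*(R τ x)*(px (px A) τ x))^2 + (12*(A τ x)*(px R τ x)*(px A τ x))^2 + (3*(A τ x)*(A τ x)*(px (px R) τ x))^2 + ((3*ε)*(R τ x)*(R τ x)*(px (px A) τ x))^2 + ((12*ε)*(px A τ x)*(R τ x)*(px R τ x))^2 + ((6*ε)*(A τ x)*(px R τ x)*(px R τ x))^2 + ((6*ε)*(A τ x)*(R τ x)*(px (px R) τ x))^2) (volume : Measure ℝ) := p9.add hIy8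
  have p11 : Integrable (fun x : ℝ => (R τ x)^2 + (ε^2*(pt (pt R) τ x))^2 + (ε*(pt (pt A) τ x))^2 + (6*(px A τ x)*(R τ x)*(px A τ x))^2 + (6*(A τ x)*(R τ x)*(px (px A) τ x))^2 + (12*(A τ x)*(px R τ x)*(px A τ x))^2 + (3*(A τ x)*(A τ x)*(px (px R) τ x))^2 + ((3*ε)*(R τ x)*(R τ x)*(px (px A) τ x))^2 + ((12*ε)*(px A τ x)*(R τ x)*(px R τ x))^2 + ((6*ε)*(A τ x)*(px R τ x)*(px R τ x))^2 + ((6*ε)*(A τ x)*(R τ x)*(px (px R) τ x))^2 + ((6*ε^2)*(R τ x)*(px R τ x)*(px R τ x))^2) (volume : Measure ℝ) := p10.add hIy9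
  have p12 : Integrable (fun x : ℝ => (R τ x)^2 + (ε^2*(pt (pt R) τ x))^2 + (ε*(pt (pt A) τ x))^2 + (6*(px A τ x)*(R τ x)*(px A τ x))^2 + (6*(A τ x)*(R τ x)*(px (px A) τ x))^2 + (12*(A τ x)*(px R τ x)*(px A τ x))^2 + (3*(A τ x)*(A τ x)*(px (px R) τ x))^2 + ((3*ε)*(R τ x)*(R τ x)*(px (px A) τ x))^2 + ((12*ε)*(px A τ x)*(R τ x)*(px R τ x))^2 + ((6*ε)*(A τ x)*(px R τ x)*(px R τ x))^2 + ((6*ε)*(A τ x)*(R τ x)*(px (px R) τ x))^2 + ((6*ε^2)*(R τ x)*(px R τ x)*(px R τ x))^2 + ((3*ε^2)*(R τ x)*(R τ x)*(px (px R) τ x))^2) (volume : Measure ℝ) := p11.add hIy10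

  have hGint : Integrable (fun x : ℝ => 20*((R τ x)^2 + (ε^2*(pt (pt R) τ x))^2 + (ε*(pt (pt A) τ x))^2 + (6*(px A τ x)*(R τ x)*(px A τ x))^2 + (6*(A τ x)*(R τ x)*(px (px A) τ x))^2 + (12*(A τ x)*(px R τ x)*(px A τ x))^2 + (3*(A τ x)*(A τ x)*(px (px R) τ x))^2 + ((3*ε)*(R τ x)*(R τ x)*(px (px A) τ x))^2 + ((12*ε)*(px A τ x)*(R τ x)*(px R τ x))^2 + ((6*ε)*(A τ x)*(px R τ x)*(px R τ x))^2 + ((6*ε)*(A τ x)*(R τ x)*(px (px R) τ x))^2 + ((6*ε^2)*(R τ x)*(px R τ x)*(px R τ x))^2 + ((3*ε^2)*(R τ x)*(R τ x)*(px (px R) τ x))^2)) (volume : Measure ℝ) := p12.const_mul 20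
  have hItot : (∫ x : ℝ, (deriv (fun y : ℝ => deriv (fun r : ℝ => R r y) τ) x)^2)
      ≤ ∫ x : ℝ, 20*((R τ x)^2 + (ε^2*(pt (pt R) τ x))^2 + (ε*(pt (pt A) τ x))^2 + (6*(px A τ x)*(R τ x)*(px A τ x))^2 + (6*(A τ x)*(R τ x)*(px (px A) τ x))^2 + (12*(A τ x)*(px R τ x)*(px A τ x))^2 + (3*(A τ x)*(A τ x)*(px (px R) τ x))^2 + ((3*ε)*(R τ x)*(R τ x)*(px (px A) τ x))^2 + ((12*ε)*(px A τ x)*(R τ x)*(px R τ x))^2 + ((6*ε)*(A τ x)*(px R τ x)*(px R τ x))^2 + ((6*ε)*(A τ x)*(R τ x)*(px (px R) τ x))^2 + ((6*ε^2)*(R τ x)*(px R τ x)*(px R τ x))^2 + ((3*ε^2)*(R τ x)*(R τ x)*(px (px R) τ x))^2) := by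
    refine integral_mono_of_nonneg (Filter.Eventually.of_forall fun x => sq_nonneg _)
      hGint (Filter.Eventually.of_forall fun x => hG x)
  have hGval : (∫ x : ℝ, 20*((R τ x)^2 + (ε^2*(pt (pt R) τ x))^2 + (ε*(pt (pt A) τ x))^2 + (6*(px A τ x)*(R τ x)*(px A τ x))^2 + (6*(A τ x)*(R τ x)*(px (px A) τ x))^2 + (12*(A τ x)*(px R τ x)*(px A τ x))^2 + (3*(A τ x)*(A τ x)*(px (px R) τ x))^2 + ((3*ε)*(R τ x)*(R τ x)*(px (px A) τ x))^2 + ((12*ε)*(px A τ x)*(R τ x)*(px R τ x))^2 + ((6*ε)*(A τ x)*(px R τ x)*(px R τ x))^2 + ((6*ε)*(A τ x)*(R τ x)*(px (px R) τ x))^2 + ((6*ε^2)*(R τ x)*(px R τ x)*(px R τ x))^2 + ((3*ε^2)*(R τ x)*(R τ x)*(px (px R) τ x))^2))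
      ≤ (1000*M)^2 := by
    rw [integral_const_mul,
    integral_add p11 hIy10,
    integral_add p10 hIy9,
    integral_add p9 hIy8,
    integral_add p8 hIy7,
    integral_add p7 hIy6,
    integral_add p6 hIy5,
    integral_add p5 hIy4,
    integral_add p4 hIy3,
    integral_add p3 hIy2,
    integral_add p2 hIy1,
    integral_add p1 hIq3,
    integral_add hIq1 hIq2]
    exact sum13_le _ _ _ _ _ _ _ _ _ _ _ _ _ _ _
      hJq1 hJq2' hJq3 hJy1 hJy2 hJy3 hJy4 hJy5 hJy6 hJy7 hJy8 hJy9 hJy10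
      (by nlinarith only [sq_nonneg M])
  calc Real.sqrt (∫ ξ : ℝ, (deriv (fun y : ℝ => deriv (fun r : ℝ => R r y) τ) ξ)^2)
      ≤ Real.sqrt ((1000*M)^2) := Real.sqrt_le_sqrt (le_trans hItot hGval)
    _ = 1000*M := Real.sqrt_sq (by linarith only [hM0])
end
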